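/- arXiv:2605.20792 — 6 statements merged into one kernel-verified Lean document; each statement's English description precedes it below -/
import Mathlib

section
/- Let K be a field, let n ≥ 3, and let Ω and Ψ be similarity classes of the n × n matrix algebra M(n,K) (orbits under conjugation by GL(n,K)). Assume that Ω and Ψ are nonscalar, i.e. they do not consist of a scalar multiple of the identity matrix. Then the set of traces of the product class, tr(ΩΨ) = { tr(ωψ) : ω ∈ Ω, ψ ∈ Ψ }, is all of K. -/
/-!
Conjugating the nonscalar matrices, we may assume `A e_i = e_k` and `B e_i = e_j` for three
distinct indices `i, j, k`. Conjugating `B` further by the transvection `1 + t E_ij` changes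
`tr (A B)` by `t ((B A)_ji - (A B)_ji) - t² A_ji B_ji`, and here `A_ji = 0` while the slope is
`B_jk - A_jj`; so the trace is an affine function of `t`. A preliminary conjugation of `B` by
`1 + c E_ik` keeps `B e_i = e_j` and shifts `B_jk` by `-c`, which makes the slope nonzero.
-/

open Matrix

theorem setOf_units_conj_eq_conjugatesOf {M : Type*} [Monoid M] (a : M) :
    {b | ∃ g : Mˣ, (g : M) * a * ↑g⁻¹ = b} = conjugatesOf a := by
  ext b
  exact exists_congr fun g => Units.mul_inv_eq_iff_eq_mul g

namespace Matrix

variable {ι : Type*} [Fintype ι] [DecidableEq ι]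

section CommRing

variable {R : Type*} [CommRing R]

theorem isConj_transvection_mul_mul (B : Matrix ι ι R) {i j : ι} (hij : i ≠ j) (c : R) :
    IsConj B (transvection i j c * B * transvection i j (-c)) := by
  have inv : transvection i j (-c) * transvection i j c = 1 := by
    rw [transvection_mul_transvection_same _ _ hij, neg_add_cancel, transvection_zero]
  refine ⟨⟨transvection i j c, transvection i j (-c), ?_, inv⟩, ?_⟩
  · rw [transvection_mul_transvection_same _ _ hij, add_neg_cancel, transvection_zero]
  · simp only [SemiconjBy, mul_assoc, inv, mul_one]

theorem trace_mul_transvection_mul_mul (A B : Matrix ι ι R) (i j : ι) (t : R) :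
    trace (A * (transvection i j t * B * transvection i j (-t))) =
      trace (A * B) + t * ((B * A) j i - (A * B) j i) - t ^ 2 * (A j i * B j i) := by
  have expand : A * (transvection i j t * B * transvection i j (-t)) =
      A * B + A * single i j t * B - A * B * single i j t
        - A * (single i j t * B * single i j t) := by
    simp only [transvection, ← single_neg]
    noncomm_ring
  rw [expand, trace_sub, trace_sub, trace_add, trace_mul_cycle, trace_mul_single,
    trace_mul_single, single_mul_mul_single, trace_mul_single]
  simp only [MulOpposite.smul_eq_mul_unop, MulOpposite.unop_op, MulOpposite.op_mul,
    MulOpposite.unop_mul]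
  ring

theorem transvection_mulVec_single_of_ne {i j l : ι} (hl : l ≠ j) (c : R) :
    transvection i j c *ᵥ Pi.single l 1 = Pi.single l 1 := by
  rw [transvection, add_mulVec, one_mulVec, single_mulVec, Pi.single_eq_of_ne hl.symm, mul_zero]
  simp

theorem mul_apply_of_mulVec_single_eq {N : Matrix ι ι R} {i j : ι}
    (h : N *ᵥ Pi.single i 1 = Pi.single j 1) (M : Matrix ι ι R) (a : ι) :
    (M * N) a i = M a j := by
  have := congrArg (M *ᵥ ·) h
  rw [mulVec_mulVec, mulVec_single_one, mulVec_single_one] at this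
  exact congrFun this a

end CommRing

section Field

variable {K : Type*} [Field K]

theorem exists_linearIndependent_pair_mulVec {M : Matrix ι ι K} (hM : ∀ c : K, M ≠ c • 1) :
    ∃ u : ι → K, LinearIndependent K ![u, M *ᵥ u] := by
  by_contra! h
  obtain ⟨c, hc⟩ := LinearMap.exists_eq_smul_id_of_forall_notLinearIndependent
    (f := toLin' M) (by simpa using h)
  exact hM c (toLin'.injective (by simp [hc, Module.End.one_eq_id]))

theorem exists_units_mulVec_single_eq {κ : Type*} [Finite κ] {v : κ → ι → K}
    (hv : LinearIndependent K v) {f : κ → ι} (hf : Function.Injective f) :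
    ∃ Q : (Matrix ι ι K)ˣ, ∀ a, (Q : Matrix ι ι K) *ᵥ Pi.single (f a) 1 = v a := by
  let b₀ := Module.Basis.extend hv.linearIndepOn_id
  let g : κ → hv.linearIndepOn_id.extend (Set.subset_univ _) := fun a =>
    ⟨v a, Module.Basis.subset_extend _ ⟨a, rfl⟩⟩
  have hg : Function.Injective g := fun a a' h => hv.injective (congrArg Subtype.val h)
  let e := b₀.indexEquiv (Pi.basisFun K ι)
  obtain ⟨σ, hσ⟩ := Equiv.Perm.exists_extending_pair (e ∘ g) f (e.injective.comp hg) hf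
  let b := b₀.reindex (e.trans σ)
  have hb : ∀ a, b (f a) = v a := by
    intro a
    rw [Module.Basis.reindex_apply, ← hσ a]
    simp [b₀, g]
  let := (Pi.basisFun K ι).invertibleToMatrix b
  refine ⟨unitOfInvertible ((Pi.basisFun K ι).toMatrix b), fun a => ?_⟩
  ext r
  simp [Module.Basis.toMatrix_apply, hb]

theorem exists_isConj_mulVec_single_eq_single {M : Matrix ι ι K} (hM : ∀ c : K, M ≠ c • 1)
    {i j : ι} (hij : i ≠ j) :
    ∃ M' : Matrix ι ι K, IsConj M M' ∧ M' *ᵥ Pi.single i 1 = Pi.single j 1 := by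
  obtain ⟨u, hu⟩ := exists_linearIndependent_pair_mulVec hM
  obtain ⟨Q, hQ⟩ := exists_units_mulVec_single_eq hu (f := ![i, j])
    (by simp [Function.Injective, Fin.forall_fin_two, hij, hij.symm])
  refine ⟨((Q⁻¹ : (Matrix ι ι K)ˣ) : Matrix ι ι K) * M * Q,
    ⟨Q⁻¹, by simp [SemiconjBy, mul_assoc]⟩, ?_⟩
  have hi : (Q : Matrix ι ι K) *ᵥ Pi.single i 1 = u := hQ 0
  have hj : (Q : Matrix ι ι K) *ᵥ Pi.single j 1 = M *ᵥ u := hQ 1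
  rw [← mulVec_mulVec, ← mulVec_mulVec, hi, ← hj, mulVec_mulVec, Units.inv_mul, one_mulVec]

theorem exists_isConj_trace_mul_eq {A B : Matrix ι ι K} {i j k : ι}
    (hij : i ≠ j) (hik : i ≠ k) (hjk : j ≠ k)
    (hA : A *ᵥ Pi.single i 1 = Pi.single k 1) (hB : B *ᵥ Pi.single i 1 = Pi.single j 1)
    (τ : K) :
    ∃ B', IsConj B B' ∧ trace (A * B') = τ := by
  set c := B j k - A j j - 1
  set B₁ := transvection i k c * B * transvection i k (-c) with hB₁def
  have hB₁ : B₁ *ᵥ Pi.single i 1 = Pi.single j 1 := by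
    rw [← mulVec_mulVec, ← mulVec_mulVec, transvection_mulVec_single_of_ne hik, hB,
      transvection_mulVec_single_of_ne hjk]
  have hBji : B j i = 1 := by simpa using congrFun hB j
  have hB₁jk : B₁ j k = A j j + 1 := by
    rw [hB₁def, mul_transvection_apply_same, transvection_mul_apply_of_ne _ _ _ _ hij.symm,
      transvection_mul_apply_of_ne _ _ _ _ hij.symm, hBji]
    ring
  have hcoeff : (B₁ * A) j i - (A * B₁) j i = 1 := by
    rw [mul_apply_of_mulVec_single_eq hA, mul_apply_of_mulVec_single_eq hB₁, hB₁jk]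
    ring
  have hAji : A j i = 0 := by simpa [hjk] using congrFun hA j
  set t := τ - trace (A * B₁)
  refine ⟨transvection i j t * B₁ * transvection i j (-t),
    (isConj_transvection_mul_mul B hik c).trans (isConj_transvection_mul_mul B₁ hij t), ?_⟩
  rw [trace_mul_transvection_mul_mul, hcoeff, hAji]
  ring

theorem exists_mem_conjugatesOf_trace_mul_eq (hι : 2 < Fintype.card ι) {A B : Matrix ι ι K}
    (hA : ∀ c : K, A ≠ c • 1) (hB : ∀ c : K, B ≠ c • 1) (τ : K) :
    ∃ A' ∈ conjugatesOf A, ∃ B' ∈ conjugatesOf B, trace (A' * B') = τ := by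
  obtain ⟨i, j, k, hij, hik, hjk⟩ := Fintype.two_lt_card_iff.mp hι
  obtain ⟨A', hAA', hA'⟩ := exists_isConj_mulVec_single_eq_single hA hik
  obtain ⟨B', hBB', hB'⟩ := exists_isConj_mulVec_single_eq_single hB hij
  obtain ⟨B'', hB'B'', hτ⟩ := exists_isConj_trace_mul_eq hij hik hjk hA' hB' τ
  exact ⟨A', hAA', B'', hBB'.trans hB'B'', hτ⟩

end Field
end Matrix

/-- **Theorem 1.** Let `K` be a field, `n ≥ 3`, and let `Ω`, `Ψ` be similarity
classes of `M(n,K)` (orbits under conjugation by `GL(n,K)`).  If `Ω` and `Ψ` are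
nonscalar, then the set of traces of products `ωψ` (`ω ∈ Ω`, `ψ ∈ Ψ`) is all of `K`. -/
theorem trace_product_similarity_classes_eq_univ
    {K : Type*} [Field K] {n : ℕ} (hn : 3 ≤ n)
    (Ω Ψ : Set (Matrix (Fin n) (Fin n) K))
    (hΩclass : ∃ A : Matrix (Fin n) (Fin n) K,
      Ω = {B | ∃ g : (Matrix (Fin n) (Fin n) K)ˣ, (g : Matrix (Fin n) (Fin n) K) * A * (↑g⁻¹ : Matrix (Fin n) (Fin n) K) = B})
    (hΨclass : ∃ A : Matrix (Fin n) (Fin n) K,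
      Ψ = {B | ∃ g : (Matrix (Fin n) (Fin n) K)ˣ, (g : Matrix (Fin n) (Fin n) K) * A * (↑g⁻¹ : Matrix (Fin n) (Fin n) K) = B})
    (hΩns : ∀ ω ∈ Ω, ∀ c : K, ω ≠ c • (1 : Matrix (Fin n) (Fin n) K))
    (hΨns : ∀ ψ ∈ Ψ, ∀ c : K, ψ ≠ c • (1 : Matrix (Fin n) (Fin n) K)) :
    {τ : K | ∃ ω ∈ Ω, ∃ ψ ∈ Ψ, (ω * ψ).trace = τ} = Set.univ := by
  obtain ⟨A, rfl⟩ := hΩclass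
  obtain ⟨B, rfl⟩ := hΨclass
  simp only [setOf_units_conj_eq_conjugatesOf] at hΩns hΨns ⊢
  refine Set.eq_univ_of_forall fun τ => ?_
  exact exists_mem_conjugatesOf_trace_mul_eq (by rw [Fintype.card_fin]; omega)
    (hΩns A mem_conjugatesOf_self) (hΨns B mem_conjugatesOf_self) τ
end

section
/- Let K be a field and let n ≥ 3; if K is infinite, assume n ≥ 4. Let Ω and Ψ be conjugacy classes of the special linear group SL(n,K) (orbits under conjugation by SL(n,K)). Assume that Ω and Ψ are nonscalar. Then tr(ΩΨ) = { tr(ωψ) : ω ∈ Ω, ψ ∈ Ψ } equals K. -/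
/-!
Conjugate so that `ω eᵢ = a eⱼ` and `ψ eᵢ = b eₖ` for distinct indices `i, j, k`: this is possible
because a nonscalar matrix moves some line and `SL` acts 2-transitively on lines. Conjugating `ψ`
further by the transvection `1 + t Eᵢⱼ` changes `tr(ωψ)` by `t (a ψⱼⱼ - b ωⱼₖ)`, the quadratic
term vanishing since `ψⱼᵢ = 0`. A preliminary conjugation of `ω` by a transvection `1 + s Eᵢₖ`
shifts `ωⱼₖ` freely while fixing `ω eᵢ`, so the slope can be made nonzero and every trace occurs.
-/

namespace Matrix

variable {ι R : Type*} [Fintype ι] [DecidableEq ι] [CommRing R]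

theorem trace_mul_transvection_mul_transvection_neg (A B : Matrix ι ι R) (i j : ι) (t : R) :
    (A * (transvection i j t * B * transvection i j (-t))).trace =
      (A * B).trace + t * ((B * A) j i - (A * B) j i) - t ^ 2 * (A j i * B j i) := by
  have hconj : transvection i j t * B * transvection i j (-t) =
      B + single i j t * B + B * single i j (-t) + single i j t * B * single i j (-t) := by
    simp only [transvection]
    noncomm_ring
  have h₁ : (A * (single i j t * B)).trace = t * (B * A) j i := by
    rw [trace_mul_comm, Matrix.mul_assoc, trace_single_mul, smul_eq_mul]
  have h₂ : (A * (B * single i j (-t))).trace = -t * (A * B) j i := by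
    rw [← Matrix.mul_assoc, trace_mul_comm, trace_single_mul, smul_eq_mul]
  have h₃ : (A * (single i j t * B * single i j (-t))).trace = -t ^ 2 * (A j i * B j i) := by
    rw [single_mul_mul_single, trace_mul_comm, trace_single_mul, smul_eq_mul]
    ring
  rw [hconj]
  simp only [Matrix.mul_add, trace_add, h₁, h₂, h₃]
  ring

theorem transvection_mul_mul_transvection_neg_apply (N : Matrix ι ι R) {i j k : ι} (hji : j ≠ i)
    (s : R) : (transvection i k s * N * transvection i k (-s)) j k = N j k - s * N j i := by
  simp [hji]
  ring

end Matrix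

namespace Matrix.SpecialLinearGroup

variable {ι K : Type*} [Fintype ι] [DecidableEq ι] [Field K]

theorem exists_linearIndependent_smul_of_ne_smul_one {M : SpecialLinearGroup ι K}
    (hM : ∀ c : K, (M : Matrix ι ι K) ≠ c • 1) :
    ∃ v : ι → K, LinearIndependent K ![v, M • v] := by
  by_contra! h
  obtain ⟨c, hc⟩ :=
    (Matrix.toLin' (M : Matrix ι ι K)).exists_eq_smul_id_of_forall_notLinearIndependent h
  apply hM c
  rw [← LinearMap.toMatrix'_toLin' (M : Matrix ι ι K), hc, map_smul, Module.End.one_eq_id,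
    LinearMap.toMatrix'_id]

theorem exists_conj_smul_single_eq_smul_single {M : SpecialLinearGroup ι K}
    (hM : ∀ c : K, (M : Matrix ι ι K) ≠ c • 1) {i j : ι} (hij : i ≠ j) :
    ∃ g : SpecialLinearGroup ι K, ∃ c : K, c ≠ 0 ∧
      (g * M * g⁻¹) • (Pi.single i 1 : ι → K) = c • Pi.single j 1 := by
  obtain ⟨v, hv⟩ := exists_linearIndependent_smul_of_ne_smul_one hM
  have hv0 : v ≠ 0 := hv.ne_zero 0
  have hMv : M • v ≠ 0 := hv.ne_zero 1
  have he (k : ι) : (Pi.single k 1 : ι → K) ≠ 0 := by simp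
  have hlines : Projectivization.mk K (M • v) hMv ≠ .mk K v hv0 := by
    rw [ne_eq, Projectivization.mk_eq_mk_iff']
    rintro ⟨a, ha⟩
    exact (LinearIndependent.pair_iff' hv0).mp hv a ha
  have hcoord : Projectivization.mk K (Pi.single j 1 : ι → K) (he j) ≠ .mk K _ (he i) := by
    rw [ne_eq, Projectivization.mk_eq_mk_iff']
    rintro ⟨a, ha⟩
    simpa [hij] using congrFun ha j
  obtain ⟨g, hgMv, hgv⟩ := (MulAction.is_two_pretransitive_iff
    (G := SpecialLinearGroup ι K)).mp inferInstance hlines hcoord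
  rw [Projectivization.smul_mk, Projectivization.mk_eq_mk_iff] at hgMv hgv
  obtain ⟨b, hb⟩ := hgMv
  obtain ⟨a, ha⟩ := hgv
  rw [Units.smul_def] at ha hb
  refine ⟨g, (a : K)⁻¹ * b, by simp, ?_⟩
  calc (g * M * g⁻¹) • (Pi.single i 1 : ι → K)
      = (g * M * g⁻¹) • ((a : K)⁻¹ • g • v) := by rw [← ha, inv_smul_smul₀ a.ne_zero]
    _ = (a : K)⁻¹ • g • M • v := by rw [smul_comm, mul_smul, mul_smul, inv_smul_smul]
    _ = _ := by rw [← hb, smul_smul]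

theorem apply_of_smul_single_eq {M : SpecialLinearGroup ι K} {i j : ι} {a : K}
    (hM : M • (Pi.single i 1 : ι → K) = a • Pi.single j 1) (l : ι) :
    (M : Matrix ι ι K) l i = (a • Pi.single j 1 : ι → K) l := by
  rw [← hM]
  simp [SpecialLinearGroup.smul_def]

theorem coe_conj_transvection {i j : ι} (hij : i ≠ j) (s : K) (M : SpecialLinearGroup ι K) :
    ((transvection hij s * M * (transvection hij s)⁻¹ : SpecialLinearGroup ι K) :
      Matrix ι ι K) = Matrix.transvection i j s * M * Matrix.transvection i j (-s) := by
  rw [transvection_inv]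
  rfl

theorem exists_conj_smul_single_eq_and_apply_eq {ω : SpecialLinearGroup ι K} {i j k : ι}
    (hij : i ≠ j) (hik : i ≠ k) (hjk : j ≠ k) {a : K} (ha : a ≠ 0)
    (hω : ω • (Pi.single i 1 : ι → K) = a • Pi.single j 1) (x : K) :
    ∃ T : SpecialLinearGroup ι K, (T * ω * T⁻¹) • (Pi.single i 1 : ι → K) = a • Pi.single j 1 ∧
      ((T * ω * T⁻¹ : SpecialLinearGroup ι K) : Matrix ι ι K) j k = x := by
  set T := transvection hik (((ω : Matrix ι ι K) j k - x) / a)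
  refine ⟨T, ?_, ?_⟩
  · rw [mul_smul, mul_smul, transvection_inv, transvection_smul_single_fst, hω, smul_comm]
    congr 1
    ext l
    simp [T, SpecialLinearGroup.smul_def, transvection_coe, one_apply, hjk.symm,
      Pi.single_apply]
  · rw [coe_conj_transvection, transvection_mul_mul_transvection_neg_apply _ hij.symm,
      apply_of_smul_single_eq hω]
    simp only [Pi.smul_apply, Pi.single_eq_same, smul_eq_mul, mul_one]
    field_simp
    ring

theorem exists_conj_trace_mul_eq {ω ψ : SpecialLinearGroup ι K} {i j k : ι}
    (hij : i ≠ j) (hjk : j ≠ k) {a b : K}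
    (hω : ω • (Pi.single i 1 : ι → K) = a • Pi.single j 1)
    (hψ : ψ • (Pi.single i 1 : ι → K) = b • Pi.single k 1)
    (hcoeff : a * (ψ : Matrix ι ι K) j j - b * (ω : Matrix ι ι K) j k ≠ 0) (τ : K) :
    ∃ U : SpecialLinearGroup ι K,
      ((ω : Matrix ι ι K) * (U * ψ * U⁻¹ : SpecialLinearGroup ι K)).trace = τ := by
  refine ⟨transvection hij ((τ - ((ω : Matrix ι ι K) * ψ).trace) /
    (a * (ψ : Matrix ι ι K) j j - b * (ω : Matrix ι ι K) j k)), ?_⟩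
  have hψω : ((ψ : Matrix ι ι K) * ω) j i = a * (ψ : Matrix ι ι K) j j := by
    simp [mul_apply, apply_of_smul_single_eq hω, Pi.single_apply, mul_comm]
  have hωψ : ((ω : Matrix ι ι K) * ψ) j i = b * (ω : Matrix ι ι K) j k := by
    simp [mul_apply, apply_of_smul_single_eq hψ, Pi.single_apply, mul_comm]
  have hψji : (ψ : Matrix ι ι K) j i = 0 := by
    simp [apply_of_smul_single_eq hψ, hjk]
  rw [coe_conj_transvection, trace_mul_transvection_mul_transvection_neg, hψω, hωψ, hψji]
  field_simp
  ring

theorem exists_trace_conj_mul_conj_eq (hι : 3 ≤ Fintype.card ι) {A B : SpecialLinearGroup ι K}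
    (hA : ∀ c : K, (A : Matrix ι ι K) ≠ c • 1) (hB : ∀ c : K, (B : Matrix ι ι K) ≠ c • 1) (τ : K) :
    ∃ g h : SpecialLinearGroup ι K, ((g * A * g⁻¹ : SpecialLinearGroup ι K) *
      (h * B * h⁻¹ : SpecialLinearGroup ι K) : Matrix ι ι K).trace = τ := by
  obtain ⟨i, j, k, hij, hik, hjk⟩ := Fintype.two_lt_card_iff.mp hι
  obtain ⟨g, a, ha, hgA⟩ := exists_conj_smul_single_eq_smul_single hA hij
  obtain ⟨h, b, hb, hhB⟩ := exists_conj_smul_single_eq_smul_single hB hik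
  set ψ := h * B * h⁻¹
  obtain ⟨T, hTgA, hTgA_jk⟩ := exists_conj_smul_single_eq_and_apply_eq hij hik hjk ha hgA
    ((a * (ψ : Matrix ι ι K) j j - 1) / b)
  have hcoeff : a * (ψ : Matrix ι ι K) j j - b * ((T * (g * A * g⁻¹) * T⁻¹ :
      SpecialLinearGroup ι K) : Matrix ι ι K) j k = 1 := by
    rw [hTgA_jk, mul_div_cancel₀ _ hb, sub_sub_cancel]
  obtain ⟨U, hU⟩ := exists_conj_trace_mul_eq hij hjk hTgA hhB (by rw [hcoeff]; exact one_ne_zero) τ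
  have conj_mul (x y z : SpecialLinearGroup ι K) :
      x * y * z * (x * y)⁻¹ = x * (y * z * y⁻¹) * x⁻¹ := by group
  exact ⟨T * g, U * h, by rwa [conj_mul, conj_mul]⟩

end Matrix.SpecialLinearGroup

theorem trace_product_conjugacy_classes_SL_eq_univ_general
    {K : Type*} [Field K] {n : ℕ} (hn : 3 ≤ n)
    (Ω Ψ : Set (Matrix.SpecialLinearGroup (Fin n) K))
    (hΩclass : ∃ A : Matrix.SpecialLinearGroup (Fin n) K,
      Ω = {B | ∃ g : Matrix.SpecialLinearGroup (Fin n) K, g * A * g⁻¹ = B})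
    (hΨclass : ∃ A : Matrix.SpecialLinearGroup (Fin n) K,
      Ψ = {B | ∃ g : Matrix.SpecialLinearGroup (Fin n) K, g * A * g⁻¹ = B})
    (hΩns : ∀ ω ∈ Ω, ∀ c : K, (ω : Matrix (Fin n) (Fin n) K) ≠ c • 1)
    (hΨns : ∀ ψ ∈ Ψ, ∀ c : K, (ψ : Matrix (Fin n) (Fin n) K) ≠ c • 1) :
    {τ : K | ∃ ω ∈ Ω, ∃ ψ ∈ Ψ,
      ((ω : Matrix (Fin n) (Fin n) K) * (ψ : Matrix (Fin n) (Fin n) K)).trace = τ} =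
      Set.univ := by
  refine Set.eq_univ_of_forall fun τ ↦ ?_
  obtain ⟨A, rfl⟩ := hΩclass
  obtain ⟨B, rfl⟩ := hΨclass
  obtain ⟨g, h, hτ⟩ := Matrix.SpecialLinearGroup.exists_trace_conj_mul_conj_eq (by simpa using hn)
    (hΩns A ⟨1, by simp⟩) (hΨns B ⟨1, by simp⟩) τ
  exact ⟨_, ⟨g, rfl⟩, _, ⟨h, rfl⟩, hτ⟩

/-- **Theorem 2.** Let `K` be a field and `n ≥ 3`; if `K` is infinite assume `n ≥ 4`.
Let `Ω`, `Ψ` be nonscalar conjugacy classes of `SL(n,K)`.  Then the set of traces of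
products `ωψ` (`ω ∈ Ω`, `ψ ∈ Ψ`) is all of `K`. -/
theorem trace_product_conjugacy_classes_SL_eq_univ
    {K : Type*} [Field K] {n : ℕ} (hn : 3 ≤ n) (hn' : Infinite K → 4 ≤ n)
    (Ω Ψ : Set (Matrix.SpecialLinearGroup (Fin n) K))
    (hΩclass : ∃ A : Matrix.SpecialLinearGroup (Fin n) K,
      Ω = {B | ∃ g : Matrix.SpecialLinearGroup (Fin n) K, g * A * g⁻¹ = B})
    (hΨclass : ∃ A : Matrix.SpecialLinearGroup (Fin n) K,
      Ψ = {B | ∃ g : Matrix.SpecialLinearGroup (Fin n) K, g * A * g⁻¹ = B})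
    (hΩns : ∀ ω ∈ Ω, ∀ c : K, (ω : Matrix (Fin n) (Fin n) K) ≠ c • 1)
    (hΨns : ∀ ψ ∈ Ψ, ∀ c : K, (ψ : Matrix (Fin n) (Fin n) K) ≠ c • 1) :
    {τ : K | ∃ ω ∈ Ω, ∃ ψ ∈ Ψ,
      ((ω : Matrix (Fin n) (Fin n) K) * (ψ : Matrix (Fin n) (Fin n) K)).trace = τ} =
      Set.univ :=
  trace_product_conjugacy_classes_SL_eq_univ_general hn Ω Ψ hΩclass hΨclass hΩns hΨns
end

section
/- Let K be a field and let Ω and Ψ be nonscalar similarity classes of M(2,K). Assume that Ω is not irreducible (the characteristic polynomial of elements of Ω is reducible over K). Then tr(ΩΨ) = K if and only if Ω is not primary (the minimal polynomial of elements of Ω is not a power of a single irreducible polynomial over K) or Ψ is not irreducible (the characteristic polynomial of elements of Ψ is reducible over K). -/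
open Matrix Polynomial

/-!
A nonscalar `2 × 2` matrix has a cyclic vector, so it is conjugate to the companion matrix of its
characteristic polynomial: the nonscalar similarity classes are exactly the sets of nonscalar
matrices with prescribed trace and determinant, and their minimal polynomial is the
characteristic one. So the class `Ω`, with eigenvalues `a, b ∈ K`, is primary iff `a = b`.

If `a ≠ b`, then `diag(a, b) ∈ Ω` and `tr(diag(a, b) ψ) = a ψ₀₀ + b ψ₁₁` takes every value as `ψ`
runs over any nonscalar class. If `Ψ` has eigenvalues `c, e ∈ K`, then `[[a, 1], [0, b]] ∈ Ω` and
the triangular matrices `[[c, x], [y, e]]` with `x y = 0` lying in `Ψ` give every trace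
`a c + b e + y`. Otherwise `a = b` and `Ψ` has no eigenvalue; conjugating the pair `(ω, ψ)`
simultaneously we may take `ω` to be the Jordan block `[[a, 1], [0, a]]`, and then
`tr(ω ψ) = a tr ψ + ψ₁₀` with `ψ₁₀ ≠ 0`, so the value `a tr Ψ` is never attained.
-/

lemma Polynomial.eq_of_mul_X_sub_C_eq_pow {K : Type*} [Field K] {a b : K} {p : K[X]}
    (hp : Irreducible p) {k : ℕ} (h : (X - C a) * (X - C b) = p ^ k) : a = b := by
  have hdvd {c : K} (hc : X - C c ∣ p ^ k) : X - C c ∣ p :=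
    (prime_X_sub_C c).dvd_of_dvd_pow hc
  have hpa : p ∣ X - C a :=
    (irreducible_X_sub_C a).dvd_symm hp (hdvd (h ▸ dvd_mul_right _ _))
  have hb : X - C b ∣ X - C a := (hdvd (h ▸ dvd_mul_left _ _)).trans hpa
  rw [dvd_iff_isRoot, IsRoot, eval_sub, eval_X, eval_C, sub_eq_zero] at hb
  exact hb.symm

namespace Matrix

lemma units_conj_ne_smul_one {n R : Type*} [Fintype n] [DecidableEq n] [CommRing R]
    {A : Matrix n n R} (hA : ∀ c : R, A ≠ c • 1) (g : (Matrix n n R)ˣ) (c : R) :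
    (g : Matrix n n R) * A * (↑g⁻¹ : Matrix n n R) ≠ c • 1 := by
  intro h
  apply hA c
  calc A = (↑g⁻¹ : Matrix n n R) * (g * A * ↑g⁻¹) * g := by simp [mul_assoc]
    _ = c • 1 := by rw [h, mul_smul_comm, mul_one, smul_mul_assoc, Units.inv_mul]

section CommRing

variable {R : Type*} [CommRing R]

def nonscalarClass (t d : R) : Set (Matrix (Fin 2) (Fin 2) R) :=
  {M | (∀ c : R, M ≠ c • 1) ∧ M.trace = t ∧ M.det = d}

lemma fin_two_mem_nonscalarClass {x y z w t d : R} (hns : y ≠ 0 ∨ z ≠ 0 ∨ x ≠ w)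
    (ht : x + w = t) (hd : x * w - y * z = d) : !![x, y; z, w] ∈ nonscalarClass t d := by
  refine ⟨fun c h => ?_, by simp [trace_fin_two, ht], by simp [det_fin_two, hd]⟩
  obtain ⟨⟨rfl, rfl⟩, rfl, rfl⟩ : (x = c ∧ y = 0) ∧ z = 0 ∧ w = c := by
    simpa [← Matrix.ext_iff, Fin.forall_fin_two] using h
  simp at hns

section Nontrivial

variable [Nontrivial R]

lemma companion_mem_nonscalarClass (t d : R) : !![0, -d; 1, t] ∈ nonscalarClass t d :=
  fin_two_mem_nonscalarClass (by simp) (by ring) (by ring)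

lemma upperTriangular_mem_nonscalarClass (a b : R) :
    !![a, 1; 0, b] ∈ nonscalarClass (a + b) (a * b) :=
  fin_two_mem_nonscalarClass (by simp) rfl (by ring)

lemma exists_trace_upperTriangular_mul_eq (a b c e τ : R) :
    ∃ ψ ∈ nonscalarClass (c + e) (c * e), (!![a, 1; 0, b] * ψ).trace = τ := by
  set y := τ - a * c - b * e
  by_cases hy : y = 0
  · refine ⟨!![c, 1; 0, e], upperTriangular_mem_nonscalarClass c e, ?_⟩
    simp [trace_fin_two]
    linear_combination -hy
  · refine ⟨!![c, 0; y, e], fin_two_mem_nonscalarClass (by simp [hy]) rfl (by ring), ?_⟩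
    simp [trace_fin_two, y]
    ring

end Nontrivial

variable [IsDomain R]

lemma not_irreducible_charpoly_fin_two_iff (M : Matrix (Fin 2) (Fin 2) R) :
    ¬ Irreducible M.charpoly ↔ ∃ a b, M.trace = a + b ∧ M.det = a * b := by
  have h₀ : M.charpoly.coeff 0 = M.det := by simp [charpoly_fin_two, coeff_C]
  have h₁ : M.charpoly.coeff 1 = -M.trace := by simp [charpoly_fin_two, coeff_C]
  rw [M.charpoly_monic.not_irreducible_iff_exists_add_mul_eq_coeff
      (by simp [M.charpoly_natDegree_eq_dim]), h₀, h₁]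
  constructor
  · rintro ⟨c₁, c₂, hd, ht⟩
    exact ⟨-c₁, -c₂, by linear_combination -ht, by linear_combination hd⟩
  · rintro ⟨a, b, ht, hd⟩
    exact ⟨-a, -b, by linear_combination hd, by linear_combination -ht⟩

lemma forall_not_irreducible_charpoly_iff (t d : R) :
    (∀ ψ ∈ nonscalarClass t d, ¬ Irreducible ψ.charpoly) ↔ ∃ c e, t = c + e ∧ d = c * e := by
  constructor
  · intro h
    simpa using (not_irreducible_charpoly_fin_two_iff _).1 (h _ (companion_mem_nonscalarClass t d))
  · rintro ⟨c, e, rfl, rfl⟩ ψ ⟨-, ht, hd⟩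
    exact (not_irreducible_charpoly_fin_two_iff ψ).2 ⟨c, e, ht, hd⟩

lemma trace_jordan_mul_ne {ψ : Matrix (Fin 2) (Fin 2) R} (hψ : Irreducible ψ.charpoly) (a : R) :
    (!![a, 1; 0, a] * ψ).trace ≠ a * ψ.trace := by
  intro h
  have hψ₁₀ : ψ 1 0 = 0 := by
    simp [trace_fin_two, vecMul, dotProduct, Fin.sum_univ_two] at h
    linear_combination h
  exact (not_irreducible_charpoly_fin_two_iff ψ).2
    ⟨ψ 0 0, ψ 1 1, trace_fin_two ψ, by simp [det_fin_two, hψ₁₀]⟩ hψ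

end CommRing

variable {K : Type*} [Field K]

lemma exists_units_conj_companion_fin_two {A : Matrix (Fin 2) (Fin 2) K}
    (hA : ∀ c : K, A ≠ c • 1) :
    ∃ g : (Matrix (Fin 2) (Fin 2) K)ˣ, (g : Matrix (Fin 2) (Fin 2) K) *
      !![0, -A.det; 1, A.trace] * (↑g⁻¹ : Matrix (Fin 2) (Fin 2) K) = A := by
  -- `det [v | A v] ≠ 0` for one of `v = e₀, e₁, e₀ + e₁`, else `A = A₀₀ • 1`.
  have hcyclic : ∃ v₀ v₁ : K,
      v₀ * (A 1 0 * v₀ + A 1 1 * v₁) - (A 0 0 * v₀ + A 0 1 * v₁) * v₁ ≠ 0 := by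
    by_contra! h
    have h₁ := h 1 0
    have h₂ := h 0 1
    have h₃ := h 1 1
    apply hA (A 0 0)
    ext i j
    fin_cases i <;> fin_cases j <;> simp
    · linear_combination -h₂
    · linear_combination h₁
    · linear_combination h₃ - h₁ - h₂
  obtain ⟨v₀, v₁, hdet⟩ := hcyclic
  set P : Matrix (Fin 2) (Fin 2) K :=
    !![v₀, A 0 0 * v₀ + A 0 1 * v₁; v₁, A 1 0 * v₀ + A 1 1 * v₁]
  have hP : IsUnit P := by
    rw [isUnit_iff_isUnit_det, det_fin_two_of]
    exact hdet.isUnit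
  -- Cayley–Hamilton: `A² v = (tr A) A v - (det A) v`.
  have hAP : A * P = P * !![0, -A.det; 1, A.trace] := by
    ext i j
    fin_cases i <;> fin_cases j <;>
      simp [P, mul_apply, Fin.sum_univ_two, trace_fin_two, det_fin_two] <;> ring
  obtain ⟨g, hg⟩ := hP
  refine ⟨g, ?_⟩
  rw [hg, ← hAP, mul_assoc, ← hg, Units.mul_inv, mul_one]

lemma exists_units_conj_eq_of_trace_eq_of_det_eq_fin_two {A B : Matrix (Fin 2) (Fin 2) K}
    (hA : ∀ c : K, A ≠ c • 1) (hB : ∀ c : K, B ≠ c • 1)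
    (ht : B.trace = A.trace) (hd : B.det = A.det) :
    ∃ g : (Matrix (Fin 2) (Fin 2) K)ˣ,
      (g : Matrix (Fin 2) (Fin 2) K) * A * (↑g⁻¹ : Matrix (Fin 2) (Fin 2) K) = B := by
  obtain ⟨g, hg⟩ := exists_units_conj_companion_fin_two hA
  obtain ⟨h, hh⟩ := exists_units_conj_companion_fin_two hB
  refine ⟨h * g⁻¹, ?_⟩
  rw [← hh, ← hg, ht, hd]
  simp only [Units.val_mul, _root_.mul_inv_rev, inv_inv, mul_assoc, Units.inv_mul_cancel_left]

lemma setOf_units_conj_eq_nonscalarClass {A : Matrix (Fin 2) (Fin 2) K}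
    (hA : ∀ c : K, A ≠ c • 1) :
    {B | ∃ g : (Matrix (Fin 2) (Fin 2) K)ˣ,
      (g : Matrix (Fin 2) (Fin 2) K) * A * (↑g⁻¹ : Matrix (Fin 2) (Fin 2) K) = B} =
      nonscalarClass A.trace A.det := by
  ext B
  constructor
  · rintro ⟨g, rfl⟩
    exact ⟨units_conj_ne_smul_one hA g, trace_units_conj g A, det_units_conj g A⟩
  · rintro ⟨hB, ht, hd⟩
    exact exists_units_conj_eq_of_trace_eq_of_det_eq_fin_two hA hB ht hd

lemma minpoly_eq_charpoly_fin_two {A : Matrix (Fin 2) (Fin 2) K} (hA : ∀ c : K, A ≠ c • 1) :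
    minpoly K A = A.charpoly := by
  have hnot : A ∉ (algebraMap K (Matrix (Fin 2) (Fin 2) K)).range := by
    rintro ⟨c, rfl⟩
    exact hA c (Algebra.algebraMap_eq_smul_one c)
  refine (eq_of_monic_of_dvd_of_natDegree_le (minpoly.monic A.isIntegral) A.charpoly_monic
    A.minpoly_dvd_charpoly ?_).symm
  rw [A.charpoly_natDegree_eq_dim, Fintype.card_fin]
  exact (minpoly.two_le_natDegree_iff A.isIntegral).2 hnot

lemma minpoly_eq_of_mem_nonscalarClass {a b : K} {M : Matrix (Fin 2) (Fin 2) K}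
    (hM : M ∈ nonscalarClass (a + b) (a * b)) : minpoly K M = (X - C a) * (X - C b) := by
  obtain ⟨hns, ht, hd⟩ := hM
  rw [minpoly_eq_charpoly_fin_two hns, charpoly_fin_two, ht, hd, C_add, C_mul]
  ring

lemma isPrimary_nonscalarClass_iff (a b : K) :
    (∃ p : K[X], p.Monic ∧ Irreducible p ∧
      ∃ k : ℕ, ∀ ω ∈ nonscalarClass (a + b) (a * b), minpoly K ω = p ^ k) ↔ a = b := by
  constructor
  · rintro ⟨p, -, hp, k, hk⟩
    have hJ := upperTriangular_mem_nonscalarClass a b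
    exact eq_of_mul_X_sub_C_eq_pow hp <| (minpoly_eq_of_mem_nonscalarClass hJ).symm.trans (hk _ hJ)
  · rintro rfl
    exact ⟨X - C a, monic_X_sub_C a, irreducible_X_sub_C a, 2,
      fun ω hω => by rw [minpoly_eq_of_mem_nonscalarClass hω, sq]⟩

lemma exists_trace_diagonal_mul_eq {a b : K} (hab : a ≠ b) (t d τ : K) :
    ∃ ψ ∈ nonscalarClass t d, (!![a, 0; 0, b] * ψ).trace = τ := by
  set x := (τ - b * t) / (a - b)
  refine ⟨!![x, 1; x * (t - x) - d, t - x],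
    fin_two_mem_nonscalarClass (by simp) (by ring) (by ring), ?_⟩
  have : a - b ≠ 0 := sub_ne_zero.2 hab
  simp [trace_fin_two, x]
  field_simp
  ring

lemma trace_mul_ne_of_mem_nonscalarClass {a : K} {ω ψ : Matrix (Fin 2) (Fin 2) K}
    (hω : ω ∈ nonscalarClass (a + a) (a * a)) (hψ : Irreducible ψ.charpoly) :
    (ω * ψ).trace ≠ a * ψ.trace := by
  obtain ⟨hns, ht, hd⟩ := hω
  have hJ := upperTriangular_mem_nonscalarClass a a
  obtain ⟨g, rfl⟩ := exists_units_conj_eq_of_trace_eq_of_det_eq_fin_two hJ.1 hns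
    (ht.trans hJ.2.1.symm) (hd.trans hJ.2.2.symm)
  have key := trace_jordan_mul_ne
    (ψ := (↑g⁻¹ : Matrix (Fin 2) (Fin 2) K) * ψ * (g : Matrix (Fin 2) (Fin 2) K))
    (by rwa [charpoly_fin_two, trace_units_conj', det_units_conj', ← charpoly_fin_two]) a
  rwa [trace_units_conj', ← mul_assoc, ← mul_assoc, trace_mul_cycle, ← mul_assoc] at key

lemma setOf_trace_mul_nonscalarClass_eq_univ_iff (a b t d : K) :
    {τ : K | ∃ ω ∈ nonscalarClass (a + b) (a * b), ∃ ψ ∈ nonscalarClass t d,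
        (ω * ψ).trace = τ} = Set.univ ↔ a ≠ b ∨ ∃ c e, t = c + e ∧ d = c * e := by
  rw [Set.eq_univ_iff_forall]
  constructor
  · intro h
    by_contra! hcon
    obtain ⟨rfl, hirr⟩ := hcon
    obtain ⟨ω, hω, ψ, hψ, htr⟩ := h (a * t)
    have hψirr : Irreducible ψ.charpoly := by
      by_contra hred
      obtain ⟨c, e, ht, hd⟩ := (not_irreducible_charpoly_fin_two_iff ψ).1 hred
      exact hirr c e (hψ.2.1.symm.trans ht) (hψ.2.2.symm.trans hd)
    exact trace_mul_ne_of_mem_nonscalarClass hω hψirr (htr.trans (by rw [hψ.2.1]))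
  · rintro (hab | ⟨c, e, rfl, rfl⟩) τ
    · obtain ⟨ψ, hψ, htr⟩ := exists_trace_diagonal_mul_eq hab t d τ
      exact ⟨_, fin_two_mem_nonscalarClass (by simp [hab]) rfl (by ring), ψ, hψ, htr⟩
    · obtain ⟨ψ, hψ, htr⟩ := exists_trace_upperTriangular_mul_eq a b c e τ
      exact ⟨_, upperTriangular_mem_nonscalarClass a b, ψ, hψ, htr⟩

end Matrix

/-- **Lemma 1(2).** Let `K` be a field and `Ω`, `Ψ` nonscalar similarity classes of
`M(2,K)` with `Ω` not irreducible.  Then the set of traces of `ΩΨ` equals `K` if and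
only if `Ω` is not primary (the minimal polynomial of its elements is not a power of a
single monic irreducible polynomial) or `Ψ` is not irreducible (the characteristic
polynomial of its elements is reducible over `K`). -/
theorem trace_product_eq_univ_iff_not_primary_or_not_irreducible
    {K : Type*} [Field K]
    (Ω Ψ : Set (Matrix (Fin 2) (Fin 2) K))
    (hΩclass : ∃ A : Matrix (Fin 2) (Fin 2) K,
      Ω = {B | ∃ g : (Matrix (Fin 2) (Fin 2) K)ˣ,
        (g : Matrix (Fin 2) (Fin 2) K) * A * (↑g⁻¹ : Matrix (Fin 2) (Fin 2) K) = B})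
    (hΨclass : ∃ A : Matrix (Fin 2) (Fin 2) K,
      Ψ = {B | ∃ g : (Matrix (Fin 2) (Fin 2) K)ˣ,
        (g : Matrix (Fin 2) (Fin 2) K) * A * (↑g⁻¹ : Matrix (Fin 2) (Fin 2) K) = B})
    (hΩns : ∀ ω ∈ Ω, ∀ c : K, ω ≠ c • (1 : Matrix (Fin 2) (Fin 2) K))
    (hΨns : ∀ ψ ∈ Ψ, ∀ c : K, ψ ≠ c • (1 : Matrix (Fin 2) (Fin 2) K))
    (hΩred : ∀ ω ∈ Ω, ¬ Irreducible (Matrix.charpoly ω)) :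
    {τ : K | ∃ ω ∈ Ω, ∃ ψ ∈ Ψ, (ω * ψ).trace = τ} = Set.univ ↔
      (¬ (∃ p : Polynomial K, p.Monic ∧ Irreducible p ∧
            ∃ k : ℕ, ∀ ω ∈ Ω, minpoly K ω = p ^ k) ∨
        ∀ ψ ∈ Ψ, ¬ Irreducible (Matrix.charpoly ψ)) := by
  obtain ⟨A, rfl⟩ := hΩclass
  obtain ⟨B, rfl⟩ := hΨclass
  obtain ⟨a, b, ht, hd⟩ := (not_irreducible_charpoly_fin_two_iff A).1 (hΩred A ⟨1, by simp⟩)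
  rw [setOf_units_conj_eq_nonscalarClass (hΩns A ⟨1, by simp⟩),
    setOf_units_conj_eq_nonscalarClass (hΨns B ⟨1, by simp⟩), ht, hd,
    setOf_trace_mul_nonscalarClass_eq_univ_iff, isPrimary_nonscalarClass_iff,
    forall_not_irreducible_charpoly_iff]
end

section
/- Let Ω and Ψ be nonscalar conjugacy classes of SL(4,3), the special linear group of 4 × 4 matrices of determinant 1 over the field with 3 elements. Then tr(ΩΨ) = { tr(ωψ) : ω ∈ Ω, ψ ∈ Ψ } equals GF(3). -/
/-!
If `A a i = 0`, conjugating `A` by the transvection `1 + t • E i a` changes `trace (A * B)` by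
exactly `t * (A * B - B * A) a i`, so all values of the field are traces as soon as some
conjugates satisfy `A a i = 0` and `(A * B - B * A) a i ≠ 0`.

Conjugating a nonscalar `A` by transvections gives `A a i = 0 ≠ A b i` for distinct `a, b, i`.
On the other side, since `2` is invertible, the span of the class of `B` is stable under
`X ↦ E * X - X * E` for every elementary `E = E p q`; for nonscalar `B` this forces it to contain
all `E p q`, in particular `E a b`, and `(A * E a b - E a b * A) a i = -A b i ≠ 0`. So the
linear form `X ↦ (A * X - X * A) a i` cannot vanish on every conjugate of `B`.
-/

open Matrix

theorem Fintype.exists_ne_ne_of_three_le_card {n : Type*} [Fintype n]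
    (h3 : 3 ≤ Fintype.card n) (x y : n) : ∃ z, z ≠ x ∧ z ≠ y :=
  Cardinal.exists_ne_ne_of_three_le (by simpa using h3) x y

namespace Matrix

theorem IsDiag.exists_apply_ne_of_ne_smul_one {n R : Type*} [DecidableEq n] [Semiring R]
    {M : Matrix n n R} (hd : M.IsDiag) (hM : ∀ c : R, M ≠ c • 1) :
    ∃ i j, M i i ≠ M j j := by
  by_contra! h
  rcases isEmpty_or_nonempty n with _ | ⟨⟨i⟩⟩
  · exact hM 0 (Subsingleton.elim _ _)
  · refine hM (M i i) ?_
    conv_lhs => rw [← hd.diagonal_diag]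
    rw [smul_one_eq_diagonal]
    exact congrArg diagonal (funext fun j => h j i)

variable {n K : Type*} [Fintype n] [DecidableEq n] [Field K]

section AdStable

variable {S : Submodule K (Matrix n n K)}

theorem exists_single_mem_of_ne_smul_one (h2 : (2 : K) ≠ 0)
    (hS : ∀ i j, i ≠ j → ∀ X ∈ S, single i j 1 * X - X * single i j 1 ∈ S)
    {B : Matrix n n K} (hB : B ∈ S) (hns : ∀ c : K, B ≠ c • 1) :
    ∃ i j, i ≠ j ∧ single i j (1 : K) ∈ S := by
  by_cases hd : B.IsDiag
  · obtain ⟨i, j, hij⟩ := hd.exists_apply_ne_of_ne_smul_one hns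
    have hne : i ≠ j := fun h => hij (h ▸ rfl)
    have hcomm :
        single i j 1 * B - B * single i j 1 = (B j j - B i i) • single i j (1 : K) := by
      conv_lhs => rw [← hd.diagonal_diag]
      ext x y
      rw [sub_apply, mul_diagonal, diagonal_mul, smul_apply]
      rcases eq_or_ne i x with rfl | hx <;> rcases eq_or_ne j y with rfl | hy <;> simp [single, *]
    refine ⟨i, j, hne, ?_⟩
    have := S.smul_mem (B j j - B i i)⁻¹ (hS i j hne B hB)
    rwa [hcomm, smul_smul, inv_mul_cancel₀ (sub_ne_zero.mpr hij.symm), one_smul] at this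
  · obtain ⟨i, j, hne, hij⟩ : ∃ i j, i ≠ j ∧ B i j ≠ 0 := by
      simpa [IsDiag, Pairwise] using hd
    set E := single j i (1 : K)
    have hEE : E * E = 0 := single_mul_single_of_ne _ _ _ _ hne _
    -- `E ^ 2 = 0` turns the double commutator into `-2 • (E * B * E)`, a multiple of `E`.
    have hdouble : E * (E * B - B * E) - (E * B - B * E) * E = (-2 * B i j) • E := by
      have hexpand : E * (E * B - B * E) - (E * B - B * E) * E =
          E * E * B + B * (E * E) - 2 • (E * B * E) := by
        noncomm_ring
      rw [hexpand, hEE, single_mul_mul_single]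
      simp [E]
    refine ⟨j, i, hne.symm, ?_⟩
    have := S.smul_mem (-2 * B i j)⁻¹ (hS j i hne.symm _ (hS j i hne.symm B hB))
    rwa [hdouble, smul_smul, inv_mul_cancel₀ (mul_ne_zero (neg_ne_zero.mpr h2) hij),
      one_smul] at this

theorem single_mem_of_mem_same_col
    (hS : ∀ i j, i ≠ j → ∀ X ∈ S, single i j 1 * X - X * single i j 1 ∈ S)
    {c d : n} (h : single c d (1 : K) ∈ S) {a : n} (had : a ≠ d) :
    single a d (1 : K) ∈ S := by
  rcases eq_or_ne a c with rfl | hac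
  · exact h
  · have := hS a c hac _ h
    rwa [single_mul_single_same, single_mul_single_of_ne _ _ _ _ had.symm, one_mul, sub_zero]
      at this

theorem single_mem_of_mem_same_row
    (hS : ∀ i j, i ≠ j → ∀ X ∈ S, single i j 1 * X - X * single i j 1 ∈ S)
    {c d : n} (h : single c d (1 : K) ∈ S) {b : n} (hbc : b ≠ c) :
    single c b (1 : K) ∈ S := by
  rcases eq_or_ne b d with rfl | hbd
  · exact h
  · have := S.neg_mem (hS d b hbd.symm _ h)
    rwa [single_mul_single_same, single_mul_single_of_ne _ _ _ _ hbc, one_mul, zero_sub,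
      neg_neg] at this

theorem single_mem_of_single_mem (h3 : 3 ≤ Fintype.card n)
    (hS : ∀ i j, i ≠ j → ∀ X ∈ S, single i j 1 * X - X * single i j 1 ∈ S)
    {c d : n} (h : single c d (1 : K) ∈ S) {a b : n} (hab : a ≠ b) :
    single a b (1 : K) ∈ S := by
  obtain ⟨e, hec, hea⟩ := Fintype.exists_ne_ne_of_three_le_card h3 c a
  have hce := single_mem_of_mem_same_row hS h hec
  have hae := single_mem_of_mem_same_col hS hce hea.symm
  exact single_mem_of_mem_same_row hS hae hab.symm

end AdStable

namespace SpecialLinearGroup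

theorem coe_transvection_mul_mul_inv {i j : n} (hij : i ≠ j) (c : K) (X : Matrix n n K) :
    (transvection hij c : Matrix n n K) * X * (↑(transvection hij c)⁻¹ : Matrix n n K) =
      X + (single i j c * X - X * single i j c) - single i j c * X * single i j c := by
  simp only [transvection_inv, transvection_coe, ← single_neg]
  noncomm_ring

-- The term quadratic in `c` is `c ^ 2 * X j i * Y j i`, which `hX` kills.
theorem trace_transvection_mul_mul_inv_mul {i j : n} (hij : i ≠ j) (c : K) {X : Matrix n n K}
    (hX : X j i = 0) (Y : Matrix n n K) :
    ((transvection hij c : Matrix n n K) * X * (↑(transvection hij c)⁻¹ : Matrix n n K) *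
      Y).trace = (X * Y).trace + c * (X * Y - Y * X) j i := by
  have hleft : (single i j c * X * Y).trace = c * (X * Y) j i := by
    rw [Matrix.mul_assoc, trace_single_mul, smul_eq_mul]
  have hright : (X * single i j c * Y).trace = c * (Y * X) j i := by
    rw [trace_mul_cycle, trace_mul_comm, trace_single_mul, smul_eq_mul]
  rw [coe_transvection_mul_mul_inv, single_mul_mul_single, hX, mul_zero, zero_mul, single_zero,
    sub_zero, add_mul, sub_mul, trace_add, trace_sub, hleft, hright, sub_apply, mul_sub]

def conjClassSpan (B : SpecialLinearGroup n K) : Submodule K (Matrix n n K) :=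
  Submodule.span K {X | ∃ B', IsConj B B' ∧ (B' : Matrix n n K) = X}

theorem coe_mem_conjClassSpan {B B' : SpecialLinearGroup n K} (h : IsConj B B') :
    (B' : Matrix n n K) ∈ conjClassSpan B :=
  Submodule.subset_span ⟨B', h, rfl⟩

theorem conj_mem_conjClassSpan {B : SpecialLinearGroup n K} (g : SpecialLinearGroup n K)
    {X : Matrix n n K} (hX : X ∈ conjClassSpan B) :
    (g : Matrix n n K) * X * (↑g⁻¹ : Matrix n n K) ∈ conjClassSpan B := by
  let conjBy : Matrix n n K →ₗ[K] Matrix n n K :=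
    LinearMap.mulRight K (↑g⁻¹ : Matrix n n K) ∘ₗ LinearMap.mulLeft K (g : Matrix n n K)
  refine (Submodule.map_span_le conjBy _ _).mpr ?_ ⟨X, hX, by simp [conjBy, Matrix.mul_assoc]⟩
  rintro _ ⟨B', hB', rfl⟩
  simpa [conjBy] using coe_mem_conjClassSpan (hB'.trans (isConj_iff.mpr ⟨g, rfl⟩))

theorem commutator_single_mem_conjClassSpan (h2 : (2 : K) ≠ 0) (B : SpecialLinearGroup n K) :
    ∀ i j, i ≠ j → ∀ X ∈ conjClassSpan B,
      single i j 1 * X - X * single i j 1 ∈ conjClassSpan B := by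
  intro i j hij X hX
  -- Conjugating by `1 + E` and by `1 - E` and subtracting leaves `2 • (E * X - X * E)`.
  have hdiff := (conjClassSpan B).sub_mem (conj_mem_conjClassSpan (transvection hij 1) hX)
    (conj_mem_conjClassSpan (transvection hij (-1)) hX)
  rw [coe_transvection_mul_mul_inv, coe_transvection_mul_mul_inv, ← single_neg] at hdiff
  convert (conjClassSpan B).smul_mem (2⁻¹ : K) hdiff using 1
  rw [eq_inv_smul_iff₀ h2, two_smul]
  noncomm_ring

theorem exists_isConj_not_isDiag {A : SpecialLinearGroup n K}
    (hA : ∀ c : K, (A : Matrix n n K) ≠ c • 1) :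
    ∃ A' : SpecialLinearGroup n K, IsConj A A' ∧ ¬ (A' : Matrix n n K).IsDiag := by
  by_cases hd : (A : Matrix n n K).IsDiag
  · obtain ⟨i, b, hib⟩ := hd.exists_apply_ne_of_ne_smul_one hA
    have hbi : b ≠ i := fun h => hib (h ▸ rfl)
    refine ⟨transvection hbi 1 * A * (transvection hbi 1)⁻¹, isConj_iff.mpr ⟨_, rfl⟩,
      fun hd' => sub_ne_zero.mpr hib (Eq.trans ?_ (hd' hbi))⟩
    rw [coe_mul, coe_mul, coe_transvection_mul_mul_inv]
    simp [hd hbi, hd hbi.symm]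
  · exact ⟨A, IsConj.refl A, hd⟩

theorem exists_isConj_apply_eq_zero_of_apply_ne_zero (h3 : 3 ≤ Fintype.card n)
    {A : SpecialLinearGroup n K} {b i : n} (hbi : b ≠ i) (hA : (A : Matrix n n K) b i ≠ 0) :
    ∃ A' : SpecialLinearGroup n K, IsConj A A' ∧ ∃ a, a ≠ b ∧ a ≠ i ∧
      (A' : Matrix n n K) a i = 0 ∧ (A' : Matrix n n K) b i ≠ 0 := by
  obtain ⟨a, hab, hai⟩ := Fintype.exists_ne_ne_of_three_le_card h3 b i
  let T := transvection hab (-((A : Matrix n n K) a i / (A : Matrix n n K) b i))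
  refine ⟨T * A * T⁻¹, isConj_iff.mpr ⟨T, rfl⟩, a, hab, hai, ?_, ?_⟩
  · rw [coe_mul, coe_mul, coe_transvection_mul_mul_inv]
    simp only [sub_apply, add_apply, single_mul_apply_same, single_mul_mul_single,
      mul_single_apply_of_ne _ _ _ _ _ hbi.symm, single_apply_of_col_ne _ _ hbi, sub_zero]
    field_simp
    ring
  · rw [coe_mul, coe_mul, coe_transvection_mul_mul_inv]
    simpa [hbi.symm, hab.symm, single_apply_of_col_ne _ _ hbi] using hA

theorem exists_isConj_apply_eq_zero_apply_ne_zero_of_ne_smul_one (h3 : 3 ≤ Fintype.card n)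
    {A : SpecialLinearGroup n K} (hA : ∀ c : K, (A : Matrix n n K) ≠ c • 1) :
    ∃ A' : SpecialLinearGroup n K, IsConj A A' ∧ ∃ a b i, a ≠ b ∧ a ≠ i ∧ b ≠ i ∧
      (A' : Matrix n n K) a i = 0 ∧ (A' : Matrix n n K) b i ≠ 0 := by
  obtain ⟨A₁, hAA₁, hA₁⟩ := exists_isConj_not_isDiag hA
  obtain ⟨b, i, hbi, hA₁bi⟩ : ∃ b i, b ≠ i ∧ (A₁ : Matrix n n K) b i ≠ 0 := by
    simpa [IsDiag, Pairwise] using hA₁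
  obtain ⟨A', hA₁A', a, hab, hai, hA'ai, hA'bi⟩ :=
    exists_isConj_apply_eq_zero_of_apply_ne_zero h3 hbi hA₁bi
  exact ⟨A', hAA₁.trans hA₁A', a, b, i, hab, hai, hbi, hA'ai, hA'bi⟩

theorem exists_isConj_commutator_apply_ne_zero {A : Matrix n n K} {B : SpecialLinearGroup n K}
    {X : Matrix n n K} (hX : X ∈ conjClassSpan B) {a i : n} (h : (A * X - X * A) a i ≠ 0) :
    ∃ B', IsConj B B' ∧ (A * B' - (B' : Matrix n n K) * A) a i ≠ 0 := by
  by_contra! hall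
  let φ := entryLinearMap K K a i ∘ₗ (LinearMap.mulLeft K A - LinearMap.mulRight K A)
  have hle : conjClassSpan B ≤ LinearMap.ker φ := Submodule.span_le.mpr <| by
    rintro _ ⟨B', hB', rfl⟩
    simpa [φ] using hall B' hB'
  exact h (by simpa [φ] using hle hX)

theorem exists_isConj_isConj_trace_mul_eq (h2 : (2 : K) ≠ 0) (h3 : 3 ≤ Fintype.card n)
    {A B : SpecialLinearGroup n K} (hA : ∀ c : K, (A : Matrix n n K) ≠ c • 1)
    (hB : ∀ c : K, (B : Matrix n n K) ≠ c • 1) (τ : K) :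
    ∃ A' B' : SpecialLinearGroup n K, IsConj A A' ∧ IsConj B B' ∧
      ((A' : Matrix n n K) * B').trace = τ := by
  obtain ⟨A', hAA', a, b, i, hab, hai, hbi, hA'ai, hA'bi⟩ :=
    exists_isConj_apply_eq_zero_apply_ne_zero_of_ne_smul_one h3 hA
  have hS := commutator_single_mem_conjClassSpan h2 B
  obtain ⟨c, d, hcd, hcd_mem⟩ :=
    exists_single_mem_of_ne_smul_one h2 hS (coe_mem_conjClassSpan (IsConj.refl B)) hB
  have hφ : ((A' : Matrix n n K) * single a b (1 : K) -
      single a b (1 : K) * (A' : Matrix n n K)) a i ≠ 0 := by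
    simpa [hbi.symm] using hA'bi
  obtain ⟨B', hBB', hδ⟩ :=
    exists_isConj_commutator_apply_ne_zero (single_mem_of_single_mem h3 hS hcd_mem hab) hφ
  let T := transvection hai.symm ((τ - ((A' : Matrix n n K) * B').trace) /
    ((A' : Matrix n n K) * B' - (B' : Matrix n n K) * A') a i)
  refine ⟨T * A' * T⁻¹, B', hAA'.trans (isConj_iff.mpr ⟨T, rfl⟩), hBB', ?_⟩
  rw [coe_mul, coe_mul, trace_transvection_mul_mul_inv_mul _ _ hA'ai]
  field_simp
  ring

end SpecialLinearGroup

end Matrix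

/-- **Lemma.** Let `Ω`, `Ψ` be nonscalar conjugacy classes of `SL(4,3)`, the group of
`4 × 4` matrices of determinant `1` over the field `GF(3) = ZMod 3`.  Then the set of
traces of products `ωψ` is all of `GF(3)`. -/
theorem trace_product_conjugacy_classes_SL4_GF3
    (Ω Ψ : Set (Matrix.SpecialLinearGroup (Fin 4) (ZMod 3)))
    (hΩclass : ∃ A : Matrix.SpecialLinearGroup (Fin 4) (ZMod 3),
      Ω = {B | ∃ g : Matrix.SpecialLinearGroup (Fin 4) (ZMod 3), g * A * g⁻¹ = B})
    (hΨclass : ∃ A : Matrix.SpecialLinearGroup (Fin 4) (ZMod 3),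
      Ψ = {B | ∃ g : Matrix.SpecialLinearGroup (Fin 4) (ZMod 3), g * A * g⁻¹ = B})
    (hΩns : ∀ ω ∈ Ω, ∀ c : ZMod 3, (ω : Matrix (Fin 4) (Fin 4) (ZMod 3)) ≠ c • 1)
    (hΨns : ∀ ψ ∈ Ψ, ∀ c : ZMod 3, (ψ : Matrix (Fin 4) (Fin 4) (ZMod 3)) ≠ c • 1) :
    {τ : ZMod 3 | ∃ ω ∈ Ω, ∃ ψ ∈ Ψ,
      ((ω : Matrix (Fin 4) (Fin 4) (ZMod 3)) * (ψ : Matrix (Fin 4) (Fin 4) (ZMod 3))).trace = τ} =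
      Set.univ := by
  obtain ⟨A, rfl⟩ := hΩclass
  obtain ⟨B, rfl⟩ := hΨclass
  refine Set.eq_univ_of_forall fun τ => ?_
  obtain ⟨A', B', hAA', hBB', htr⟩ := SpecialLinearGroup.exists_isConj_isConj_trace_mul_eq
    (by decide) (by simp) (hΩns A ⟨1, by simp⟩) (hΨns B ⟨1, by simp⟩) τ
  exact ⟨A', isConj_iff.mp hAA', B', isConj_iff.mp hBB', htr⟩
end

section
/- Let K be a field, let n ≥ 4, and let Ω and Ψ be nonscalar conjugacy classes of SL(n,K). Then tr(ΩΨ) = { tr(ωψ) : ω ∈ Ω, ψ ∈ Ψ } equals K. -/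
set_option linter.unusedSectionVars false
set_option maxHeartbeats 1000000

open Matrix Submodule Module

namespace SLTraceAux

variable {K : Type*} [Field K] {n : ℕ}


lemma finrankV : Module.finrank K (Fin n → K) = n := by
  simp

lemma exists_not_mem_of_finrank_lt {W : Submodule K (Fin n → K)}
    (h : Module.finrank K W < n) : ∃ w, w ∉ W := by
  by_contra hc
  push_neg at hc
  have hW : W = ⊤ := Submodule.eq_top_iff'.mpr hc
  rw [hW, finrank_top, finrankV] at h
  omega

lemma pair_eq_range (a b : Fin n → K) : ({a, b} : Set (Fin n → K)) = Set.range ![a, b] := by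
  ext x
  simp [Matrix.range_cons, Matrix.range_empty]
  tauto

lemma triple_eq_range (a b c : Fin n → K) :
    ({a, b, c} : Set (Fin n → K)) = Set.range ![a, b, c] := by
  ext x
  simp [Matrix.range_cons, Matrix.range_empty]
  tauto

lemma finrank_span_pair_le (a b : Fin n → K) :
    Module.finrank K (span K ({a, b} : Set (Fin n → K))) ≤ 2 := by
  rw [pair_eq_range]
  simpa [Set.finrank] using finrank_range_le_card (R := K) ![a, b]

lemma finrank_span_triple_le (a b c : Fin n → K) :
    Module.finrank K (span K ({a, b, c} : Set (Fin n → K))) ≤ 3 := by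
  rw [triple_eq_range]
  simpa [Set.finrank] using finrank_range_le_card (R := K) ![a, b, c]

lemma solve1 {x z : Fin n → K} {s u : K} (h : s • x + u • z = 0) (hu : u ≠ 0) :
    z ∈ span K ({x} : Set (Fin n → K)) := by
  rw [Submodule.mem_span_singleton]
  refine ⟨-(u⁻¹ * s), ?_⟩
  have h2 : s • x = -(u • z) := eq_neg_of_add_eq_zero_left h
  calc -(u⁻¹ * s) • x = -(u⁻¹ • (s • x)) := by module
    _ = -(u⁻¹ • -(u • z)) := by rw [h2]
    _ = (u⁻¹ * u) • z := by module
    _ = z := by rw [inv_mul_cancel₀ hu, one_smul]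

lemma solve2 {x y z : Fin n → K} {s t u : K} (h : s • x + t • y + u • z = 0) (hu : u ≠ 0) :
    z ∈ span K ({x, y} : Set (Fin n → K)) := by
  rw [Submodule.mem_span_pair]
  refine ⟨-(u⁻¹ * s), -(u⁻¹ * t), ?_⟩
  have h2 : s • x + t • y = -(u • z) := eq_neg_of_add_eq_zero_left h
  calc -(u⁻¹ * s) • x + -(u⁻¹ * t) • y = -(u⁻¹ • (s • x + t • y)) := by module
    _ = -(u⁻¹ • -(u • z)) := by rw [h2]
    _ = (u⁻¹ * u) • z := by module
    _ = z := by rw [inv_mul_cancel₀ hu, one_smul]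

lemma mem_span_triple {x y w z : Fin n → K} {r s t : K} (h : r • x + s • y + t • w = z) :
    z ∈ span K ({x, y, w} : Set (Fin n → K)) := by
  subst h
  refine add_mem (add_mem ?_ ?_) ?_
  · exact smul_mem _ _ (subset_span (by simp))
  · exact smul_mem _ _ (subset_span (by simp))
  · exact smul_mem _ _ (subset_span (by simp))

lemma solve3 {x y w z : Fin n → K} {s t u r : K}
    (h : s • x + t • y + u • w + r • z = 0) (hr : r ≠ 0) :
    z ∈ span K ({x, y, w} : Set (Fin n → K)) := by
  apply mem_span_triple (r := -(r⁻¹ * s)) (s := -(r⁻¹ * t)) (t := -(r⁻¹ * u))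
  have h2 : s • x + t • y + u • w = -(r • z) := eq_neg_of_add_eq_zero_left h
  calc -(r⁻¹ * s) • x + -(r⁻¹ * t) • y + -(r⁻¹ * u) • w
      = -(r⁻¹ • (s • x + t • y + u • w)) := by module
    _ = -(r⁻¹ • -(r • z)) := by rw [h2]
    _ = (r⁻¹ * r) • z := by module
    _ = z := by rw [inv_mul_cancel₀ hr, one_smul]

lemma li2 {a b : Fin n → K} (ha : a ≠ 0) (hb : b ∉ span K ({a} : Set (Fin n → K))) :
    LinearIndependent K ![a, b] := by
  rw [Fintype.linearIndependent_iff]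
  intro g hg
  have e1 : g 0 • a + g 1 • b = 0 := by simpa [Fin.sum_univ_two] using hg
  have h1 : g 1 = 0 := by
    by_contra h
    exact hb (solve1 e1 h)
  rw [h1, zero_smul, add_zero, smul_eq_zero] at e1
  intro i
  fin_cases i
  · exact e1.resolve_right ha
  · exact h1

lemma li3 {a b c : Fin n → K} (ha : a ≠ 0) (hb : b ∉ span K ({a} : Set (Fin n → K)))
    (hc : c ∉ span K ({a, b} : Set (Fin n → K))) :
    LinearIndependent K ![a, b, c] := by
  rw [Fintype.linearIndependent_iff]
  intro g hg
  have e1 : g 0 • a + g 1 • b + g 2 • c = 0 := by simpa [Fin.sum_univ_three] using hg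
  have h2 : g 2 = 0 := by
    by_contra h
    exact hc (solve2 e1 h)
  rw [h2, zero_smul, add_zero] at e1
  have h1 : g 1 = 0 := by
    by_contra h
    exact hb (solve1 e1 h)
  rw [h1, zero_smul, add_zero, smul_eq_zero] at e1
  intro i
  fin_cases i
  · exact e1.resolve_right ha
  · exact h1
  · exact h2

lemma li4 {a b c d : Fin n → K} (ha : a ≠ 0) (hb : b ∉ span K ({a} : Set (Fin n → K)))
    (hc : c ∉ span K ({a, b} : Set (Fin n → K)))
    (hd : d ∉ span K ({a, b, c} : Set (Fin n → K))) :
    LinearIndependent K ![a, b, c, d] := by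
  rw [Fintype.linearIndependent_iff]
  intro g hg
  have e1 : g 0 • a + g 1 • b + g 2 • c + g 3 • d = 0 := by
    simpa [Fin.sum_univ_four] using hg
  have h3 : g 3 = 0 := by
    by_contra h
    exact hd (solve3 e1 h)
  rw [h3, zero_smul, add_zero] at e1
  have h2 : g 2 = 0 := by
    by_contra h
    exact hc (solve2 e1 h)
  rw [h2, zero_smul, add_zero] at e1
  have h1 : g 1 = 0 := by
    by_contra h
    exact hb (solve1 e1 h)
  rw [h1, zero_smul, add_zero, smul_eq_zero] at e1
  intro i
  fin_cases i
  · exact e1.resolve_right ha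
  · exact h1
  · exact h2
  · exact h3


lemma exists_basis_ext {k : ℕ} (s : Fin k → (Fin n → K)) (hs : LinearIndependent K s) :
    ∃ b : Basis (Fin k ⊕ Fin (n - k)) K (Fin n → K), ∀ i, b (Sum.inl i) = s i := by
  classical
  set W := span K (Set.range s) with hWdef
  obtain ⟨Wc, hWc⟩ := Submodule.exists_isCompl W
  have hfW : finrank K W = k := by
    rw [hWdef, finrank_span_eq_card hs, Fintype.card_fin]
  have hfWc : finrank K Wc = n - k := by
    have h := Submodule.finrank_add_eq_of_isCompl hWc
    rw [hfW, finrankV] at h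
    omega
  let cb : Basis (Fin (n - k)) K Wc := Module.finBasisOfFinrankEq K Wc hfWc
  let fam : Fin k ⊕ Fin (n - k) → (Fin n → K) := Sum.elim s fun j => (cb j : Fin n → K)
  have hrange : (Set.range fun j : Fin (n-k) => (cb j : Fin n → K)) = Wc.subtype '' (Set.range cb) := by
    ext x
    simp
  have hspanc : span K (Set.range fun j : Fin (n-k) => (cb j : Fin n → K)) = Wc := by
    rw [hrange, Submodule.span_image, cb.span_eq, Submodule.map_subtype_top]
  have hind : LinearIndependent K fam := by
    apply LinearIndependent.sum_type hs
    · exact cb.linearIndependent.map' Wc.subtype (Submodule.ker_subtype Wc)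
    · rw [hspanc]
      exact hWc.disjoint
  have hsp : ⊤ ≤ span K (Set.range fam) := by
    rw [show Set.range fam = Set.range s ∪ Set.range (fun j : Fin (n-k) => (cb j : Fin n → K)) from Set.Sum.elim_range _ _]
    rw [Submodule.span_union, hspanc, ← hWdef, hWc.sup_eq_top]
  refine ⟨Basis.mk hind hsp, fun i => ?_⟩
  rw [Basis.mk_apply]
  rfl

lemma det_constr {ι : Type*} [Fintype ι] [DecidableEq ι] (b : Basis ι K (Fin n → K)) (t : ι → (Fin n → K)) :
    LinearMap.det (b.constr K t) = b.det t := by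
  have h := b.det_comp (b.constr K t) ⇑b
  rw [Basis.det_self, mul_one] at h
  rw [← h]
  congr 1
  funext i
  exact b.constr_basis K t i

lemma toSL {φ : (Fin n → K) →ₗ[K] (Fin n → K)} (h : LinearMap.det φ = 1) :
    ∃ g : Matrix.SpecialLinearGroup (Fin n) K, ∀ x, (g : Matrix (Fin n) (Fin n) K).mulVec x = φ x := by
  refine ⟨⟨LinearMap.toMatrix' φ, by rw [LinearMap.det_toMatrix' φ]; exact h⟩, fun x => ?_⟩
  rw [← Matrix.toLin'_apply, Matrix.toLin'_toMatrix']


lemma exists_nonscalar_vec (h2 : 2 ≤ n) {M : Matrix (Fin n) (Fin n) K}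
    (hns : ∀ c : K, M ≠ c • 1) :
    ∃ v, M.mulVec v ∉ span K ({v} : Set (Fin n → K)) := by
  by_contra hcon
  push_neg at hcon
  have hc : ∀ v : Fin n → K, ∃ c : K, M.mulVec v = c • v := by
    intro v
    obtain ⟨c, hcv⟩ := Submodule.mem_span_singleton.mp (hcon v)
    exact ⟨c, hcv.symm⟩
  have i0 : Fin n := ⟨0, by omega⟩
  obtain ⟨c0, hc0⟩ := hc (Pi.single i0 1)
  apply hns c0
  ext i j
  obtain ⟨cj, hcj⟩ := hc (Pi.single j 1)
  have hcj0 : cj = c0 := by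
    by_cases hji : j = i0
    · subst hji
      have := congrFun (hc0.symm.trans hcj) j
      have h2 : c0 = cj := by simpa using this
      exact h2.symm
    · obtain ⟨c', hc'⟩ := hc (Pi.single i0 1 + Pi.single j 1)
      rw [Matrix.mulVec_add, hc0, hcj] at hc'
      have e0 := congrFun hc' i0
      have ej := congrFun hc' j
      simp [Pi.single_apply, hji, Ne.symm hji] at e0 ej
      rw [ej, e0]
  have hMij : M i j = cj * (Pi.single j 1 : Fin n → K) i := by
    have := congrFun hcj i
    simpa [Matrix.mulVec_single] using this
  rw [hMij, hcj0]
  by_cases hij : i = j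
  · subst hij; simp [Pi.single_apply, Matrix.one_apply]
  · simp [Pi.single_apply, Matrix.one_apply, hij, Ne.symm hij]


lemma rank_one_form (h2 : 2 ≤ n) {M : Matrix (Fin n) (Fin n) K} {p₀ : Fin n → K} (hp : p₀ ≠ 0)
    (hq : ∀ q, M.mulVec q ∈ span K ({p₀, q} : Set (Fin n → K))) :
    ∃ b : K, ∀ x, M.mulVec x - b • x ∈ span K ({p₀} : Set (Fin n → K)) := by
  have hp0 : M.mulVec p₀ ∈ span K ({p₀} : Set (Fin n → K)) := by
    have h := hq p₀
    rwa [Set.pair_eq_singleton] at h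
  obtain ⟨lam, hlam⟩ := Submodule.mem_span_singleton.mp hp0
  obtain ⟨q₁, hq₁⟩ := exists_not_mem_of_finrank_lt
    (W := span K ({p₀} : Set (Fin n → K)))
    (by rw [finrank_span_singleton hp]; omega)
  obtain ⟨a₁, b, hab⟩ := Submodule.mem_span_pair.mp (hq q₁)
  refine ⟨b, fun x => ?_⟩
  by_cases hx1 : x ∈ span K ({p₀, q₁} : Set (Fin n → K))
  · obtain ⟨cc, d, hcd⟩ := Submodule.mem_span_pair.mp hx1
    have hMx : M.mulVec x = cc • (lam • p₀) + d • (a₁ • p₀ + b • q₁) := by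
      rw [← hcd, Matrix.mulVec_add, Matrix.mulVec_smul, Matrix.mulVec_smul, hlam, hab]
    rw [Submodule.mem_span_singleton]
    refine ⟨cc * lam + d * a₁ - b * cc, ?_⟩
    rw [hMx, ← hcd]
    module
  · obtain ⟨α, β, hx⟩ := Submodule.mem_span_pair.mp (hq x)
    obtain ⟨γ, δ, hqx⟩ := Submodule.mem_span_pair.mp (hq (q₁ + x))
    have hMqx : M.mulVec (q₁ + x) = (a₁ • p₀ + b • q₁) + (α • p₀ + β • x) := by
      rw [Matrix.mulVec_add, hab, hx]
    have h1 : γ • p₀ + δ • (q₁ + x) - ((a₁ • p₀ + b • q₁) + (α • p₀ + β • x)) = 0 := by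
      rw [hqx, hMqx]; abel
    have hcomb : (γ - a₁ - α) • p₀ + (δ - b) • q₁ + (δ - β) • x = 0 := by
      calc (γ - a₁ - α) • p₀ + (δ - b) • q₁ + (δ - β) • x
          = γ • p₀ + δ • (q₁ + x) - ((a₁ • p₀ + b • q₁) + (α • p₀ + β • x)) := by module
        _ = 0 := h1
    have hind := li3 hp hq₁ hx1
    rw [Fintype.linearIndependent_iff] at hind
    have hz := hind ![γ - a₁ - α, δ - b, δ - β] (by
      rw [Fin.sum_univ_three]
      simpa using hcomb)
    have hδb : δ - b = 0 := by simpa using hz 1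
    have hδβ : δ - β = 0 := by simpa using hz 2
    have hβb : β = b := ((sub_eq_zero.mp hδβ).symm.trans (sub_eq_zero.mp hδb))
    rw [Submodule.mem_span_singleton]
    refine ⟨α, ?_⟩
    rw [← hx, hβb]
    module

lemma kc1_of_form (hn : 4 ≤ n) {M : Matrix (Fin n) (Fin n) K} (hns : ∀ c : K, M ≠ c • 1)
    {p₀ : Fin n → K} (hp : p₀ ≠ 0) {b : K}
    (hf : ∀ x, M.mulVec x - b • x ∈ span K ({p₀} : Set (Fin n → K))) :
    ∃ p q, M.mulVec p ∈ span K ({p, q} : Set (Fin n → K)) ∧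
      LinearIndependent K ![p, q, M.mulVec q] := by
  classical
  set T : (Fin n → K) →ₗ[K] (Fin n → K) := M.mulVecLin - b • LinearMap.id with hT
  have hTapp : ∀ x, T x = M.mulVec x - b • x := by
    intro x
    simp [hT, Matrix.mulVecLin_apply]
  have hrange : LinearMap.range T ≤ span K ({p₀} : Set (Fin n → K)) := by
    rintro y ⟨x, rfl⟩
    rw [hTapp]
    exact hf x
  have hfr : finrank K (LinearMap.range T) ≤ 1 := by
    calc finrank K (LinearMap.range T) ≤ finrank K (span K ({p₀} : Set (Fin n → K))) :=
          Submodule.finrank_mono hrange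
      _ = 1 := finrank_span_singleton hp
  have hrn := LinearMap.finrank_range_add_finrank_ker T
  rw [finrankV] at hrn
  have hEfr : n - 1 ≤ finrank K (LinearMap.ker T) := by omega
  have hEne : LinearMap.ker T ≠ ⊤ := by
    intro hEt
    apply hns b
    ext i j
    have hx0 : T (Pi.single j 1) = 0 := by
      have : (Pi.single j 1 : Fin n → K) ∈ LinearMap.ker T := by rw [hEt]; trivial
      exact LinearMap.mem_ker.mp this
    have hMs : M.mulVec (Pi.single j 1) = b • (Pi.single j 1 : Fin n → K) := by
      have h := (hTapp (Pi.single j 1)).symm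
      rw [hx0] at h
      exact sub_eq_zero.mp h
    have hentry : M i j = b * (Pi.single j 1 : Fin n → K) i := by
      have := congrFun hMs i
      simpa [Matrix.mulVec_single] using this
    rw [hentry]
    by_cases hij : i = j
    · subst hij; simp [Pi.single_apply, Matrix.one_apply]
    · simp [Pi.single_apply, Matrix.one_apply, hij, Ne.symm hij]
  obtain ⟨y, hy⟩ : ∃ y, y ∉ LinearMap.ker T := by
    by_contra hcon
    push_neg at hcon
    exact hEne (Submodule.eq_top_iff'.mpr hcon)
  have hqex : ∃ q, q ∉ LinearMap.ker T ∧ q ∉ span K ({p₀} : Set (Fin n → K)) := by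
    by_cases hysp : y ∈ span K ({p₀} : Set (Fin n → K))
    · have hnotle : ¬ (LinearMap.ker T ≤ span K ({p₀} : Set (Fin n → K))) := by
        intro hle
        have h1 := Submodule.finrank_mono hle
        rw [finrank_span_singleton hp] at h1
        omega
      obtain ⟨z, hzE, hz⟩ := SetLike.not_le_iff_exists.mp hnotle
      refine ⟨y + z, fun hmem => hy ?_, fun hmem => hz ?_⟩
      · have := (LinearMap.ker T).sub_mem hmem hzE
        simpa using this
      · have := (span K ({p₀} : Set (Fin n → K))).sub_mem hmem hysp
        simpa using this
    · exact ⟨y, hy, hysp⟩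
  obtain ⟨q, hqE, hqp⟩ := hqex
  have hnotle2 : ¬ (LinearMap.ker T ≤ span K ({p₀, q} : Set (Fin n → K))) := by
    intro hle
    have h1 := Submodule.finrank_mono hle
    have h2 := finrank_span_pair_le (n := n) p₀ q
    omega
  obtain ⟨p, hpE, hpsp⟩ := SetLike.not_le_iff_exists.mp hnotle2
  have hMp : M.mulVec p = b • p := by
    have h0 : T p = 0 := LinearMap.mem_ker.mp hpE
    rw [hTapp] at h0
    rwa [sub_eq_zero] at h0
  obtain ⟨cq, hcq⟩ := Submodule.mem_span_singleton.mp (hf q)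
  have hcqne : cq ≠ 0 := by
    intro h0
    apply hqE
    rw [LinearMap.mem_ker, hTapp, ← hcq, h0, zero_smul]
  have hp0 : p ≠ 0 := fun h => hpsp (h ▸ Submodule.zero_mem _)
  have hq0 : q ≠ 0 := fun h => hqp (h ▸ Submodule.zero_mem _)
  have hqsp : q ∉ span K ({p} : Set (Fin n → K)) := by
    intro hmem
    obtain ⟨t, ht⟩ := Submodule.mem_span_singleton.mp hmem
    apply hqE
    rw [← ht]
    exact (LinearMap.ker T).smul_mem t hpE
  have hMq : M.mulVec q ∉ span K ({p, q} : Set (Fin n → K)) := by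
    intro hmem
    have hp₀mem : p₀ ∈ span K ({p, q} : Set (Fin n → K)) := by
      have h1 : cq • p₀ ∈ span K ({p, q} : Set (Fin n → K)) := by
        rw [hcq]
        exact Submodule.sub_mem _ hmem
          (Submodule.smul_mem _ _ (subset_span (by simp)))
      have h2 := Submodule.smul_mem _ cq⁻¹ h1
      rwa [smul_smul, inv_mul_cancel₀ hcqne, one_smul] at h2
    obtain ⟨u, w, huw⟩ := Submodule.mem_span_pair.mp hp₀mem
    by_cases hu : u = 0
    · apply hqp
      rw [Submodule.mem_span_singleton]
      have hw : w ≠ 0 := by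
        intro h0
        apply hp
        rw [← huw, hu, h0, zero_smul, zero_smul, add_zero]
      refine ⟨w⁻¹, ?_⟩
      rw [← huw, hu, zero_smul, zero_add, smul_smul, inv_mul_cancel₀ hw, one_smul]
    · apply hpsp
      rw [Submodule.mem_span_pair]
      refine ⟨u⁻¹, -(u⁻¹ * w), ?_⟩
      calc u⁻¹ • p₀ + -(u⁻¹ * w) • q = u⁻¹ • (u • p + w • q) + -(u⁻¹ * w) • q := by rw [huw]
        _ = (u⁻¹ * u) • p := by module
        _ = p := by rw [inv_mul_cancel₀ hu, one_smul]
  refine ⟨p, q, ?_, li3 hp0 hqsp hMq⟩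
  rw [Submodule.mem_span_pair]
  exact ⟨b, 0, by rw [hMp]; module⟩

lemma dichotomy (hn : 4 ≤ n) {M : Matrix (Fin n) (Fin n) K} (hns : ∀ c : K, M ≠ c • 1) :
    (∃ p q, M.mulVec p ∈ span K ({p, q} : Set (Fin n → K)) ∧
      LinearIndependent K ![p, q, M.mulVec q]) ∨
    (∃ p q, LinearIndependent K ![p, q, M.mulVec p, M.mulVec q]) := by
  classical
  by_cases h1 : (∃ p q, M.mulVec p ∈ span K ({p, q} : Set (Fin n → K)) ∧
      LinearIndependent K ![p, q, M.mulVec q])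
  · exact Or.inl h1
  right
  push_neg at h1
  have hNE : ∀ x : Fin n → K, x ≠ 0 → M.mulVec x ∉ span K ({x} : Set (Fin n → K)) := by
    intro x hx hmem
    have hRhyp : ∀ q, M.mulVec q ∈ span K ({x, q} : Set (Fin n → K)) := by
      intro q
      by_cases hq : q ∈ span K ({x} : Set (Fin n → K))
      · obtain ⟨t, ht⟩ := Submodule.mem_span_singleton.mp hq
        have hMq : M.mulVec q = t • M.mulVec x := by rw [← ht, Matrix.mulVec_smul]
        rw [hMq]
        exact Submodule.smul_mem _ _ (span_mono (by simp) hmem)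
      · by_contra hnq
        exact h1 x q (span_mono (by simp) hmem) (li3 hx hq hnq)
    obtain ⟨b, hb⟩ := rank_one_form (by omega) hx hRhyp
    obtain ⟨p, q, hh⟩ := kc1_of_form hn hns hx hb
    exact h1 p q hh.1 hh.2
  have hW : ∀ x : Fin n → K, x ≠ 0 →
      M.mulVec (M.mulVec x) ∈ span K ({x, M.mulVec x} : Set (Fin n → K)) := by
    intro x hx
    by_contra hnm
    have hMx0 : M.mulVec x ∉ span K ({x} : Set (Fin n → K)) := hNE x hx
    exact h1 x (M.mulVec x) (Submodule.mem_span_pair.mpr ⟨0, 1, by module⟩)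
      (li3 hx hMx0 hnm)
  have hInv : ∀ x : Fin n → K, x ≠ 0 → ∀ z ∈ span K ({x, M.mulVec x} : Set (Fin n → K)),
      M.mulVec z ∈ span K ({x, M.mulVec x} : Set (Fin n → K)) := by
    intro x hx z hz
    obtain ⟨a, c, hac⟩ := Submodule.mem_span_pair.mp hz
    have hMz : M.mulVec z = a • M.mulVec x + c • M.mulVec (M.mulVec x) := by
      rw [← hac, Matrix.mulVec_add, Matrix.mulVec_smul, Matrix.mulVec_smul]
    rw [hMz]
    exact Submodule.add_mem _ (Submodule.smul_mem _ _ (subset_span (by simp)))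
      (Submodule.smul_mem _ _ (hW x hx))
  have hn0 : 0 < n := by omega
  set p₁ : Fin n → K := Pi.single ⟨0, hn0⟩ 1 with hp₁def
  have hp₁ : p₁ ≠ 0 := by
    intro h0
    have := congrFun h0 ⟨0, hn0⟩
    simp [hp₁def] at this
  obtain ⟨q, hqW⟩ := exists_not_mem_of_finrank_lt
    (W := span K ({p₁, M.mulVec p₁} : Set (Fin n → K)))
    (lt_of_le_of_lt (finrank_span_pair_le _ _) (by omega))
  have hq0 : q ≠ 0 := fun h => hqW (h ▸ Submodule.zero_mem _)
  refine ⟨p₁, q, ?_⟩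
  by_contra hdep
  obtain ⟨g, hsum, i, hgi⟩ := Fintype.not_linearIndependent_iff.mp hdep
  have e1 : g 0 • p₁ + g 1 • q + g 2 • M.mulVec p₁ + g 3 • M.mulVec q = 0 := by
    have := hsum
    rw [Fin.sum_univ_four] at this
    simpa using this
  set z := g 0 • p₁ + g 2 • M.mulVec p₁ with hzdef
  have hzeq : z = -(g 1 • q + g 3 • M.mulVec q) := by
    have h2 : z = (g 0 • p₁ + g 1 • q + g 2 • M.mulVec p₁ + g 3 • M.mulVec q)
        - (g 1 • q + g 3 • M.mulVec q) := by rw [hzdef]; module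
    rw [h2, e1, zero_sub]
  by_cases hz0 : z = 0
  · have hpair1 : ∀ s t : K, s • p₁ + t • M.mulVec p₁ = 0 → s = 0 ∧ t = 0 := by
      intro s t hst
      have ht : t = 0 := by
        by_contra h
        exact (hNE p₁ hp₁) (solve1 hst h)
      rw [ht, zero_smul, add_zero, smul_eq_zero] at hst
      exact ⟨hst.resolve_right hp₁, ht⟩
    have hpair2 : ∀ s t : K, s • q + t • M.mulVec q = 0 → s = 0 ∧ t = 0 := by
      intro s t hst
      have ht : t = 0 := by
        by_contra h
        exact (hNE q hq0) (solve1 hst h)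
      rw [ht, zero_smul, add_zero, smul_eq_zero] at hst
      exact ⟨hst.resolve_right hq0, ht⟩
    obtain ⟨h02, h22⟩ := hpair1 (g 0) (g 2) (by rw [← hzdef]; exact hz0)
    have hz' : g 1 • q + g 3 • M.mulVec q = 0 := by
      have h3 := hzeq
      rw [hz0] at h3
      have h4 := h3.symm
      rwa [neg_eq_zero] at h4
    obtain ⟨h12, h32⟩ := hpair2 (g 1) (g 3) hz'
    apply hgi
    fin_cases i
    · exact h02
    · exact h12
    · exact h22
    · exact h32
  · set Wp := span K ({p₁, M.mulVec p₁} : Set (Fin n → K)) with hWpdef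
    set Wq := span K ({q, M.mulVec q} : Set (Fin n → K)) with hWqdef
    have hzWp : z ∈ Wp := Submodule.add_mem _
      (Submodule.smul_mem _ _ (subset_span (by simp)))
      (Submodule.smul_mem _ _ (subset_span (by simp)))
    have hzWq : z ∈ Wq := by
      rw [hzeq]
      exact Submodule.neg_mem _ (Submodule.add_mem _
        (Submodule.smul_mem _ _ (subset_span (by simp)))
        (Submodule.smul_mem _ _ (subset_span (by simp))))
    have hMzWp : M.mulVec z ∈ Wp := hInv p₁ hp₁ z hzWp
    have hMzWq : M.mulVec z ∈ Wq := hInv q hq0 z hzWq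
    have hindz : LinearIndependent K ![z, M.mulVec z] := li2 hz0 (hNE z hz0)
    have hindp : LinearIndependent K ![p₁, M.mulVec p₁] := li2 hp₁ (hNE p₁ hp₁)
    have hindq : LinearIndependent K ![q, M.mulVec q] := li2 hq0 (hNE q hq0)
    have hfr2 : ∀ (a b : Fin n → K), LinearIndependent K ![a, b] →
        finrank K (span K ({a, b} : Set (Fin n → K))) = 2 := by
      intro a b hab
      rw [pair_eq_range, finrank_span_eq_card hab]
      simp
    have hle1 : span K ({z, M.mulVec z} : Set (Fin n → K)) ≤ Wp := by
      rw [span_le]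
      intro y hy
      rcases hy with rfl | hy
      · exact hzWp
      · rw [Set.mem_singleton_iff] at hy
        subst hy
        exact hMzWp
    have hle2 : span K ({z, M.mulVec z} : Set (Fin n → K)) ≤ Wq := by
      rw [span_le]
      intro y hy
      rcases hy with rfl | hy
      · exact hzWq
      · rw [Set.mem_singleton_iff] at hy
        subst hy
        exact hMzWq
    have he1 := Submodule.eq_of_le_of_finrank_le hle1
      (by rw [hfr2 _ _ hindp, hfr2 _ _ hindz])
    have he2 := Submodule.eq_of_le_of_finrank_le hle2
      (by rw [hfr2 _ _ hindq, hfr2 _ _ hindz])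
    apply hqW
    have hqWq : q ∈ Wq := subset_span (by simp)
    rw [← he2, he1] at hqWq
    exact hqWq

lemma conj_mulVec (g B : Matrix.SpecialLinearGroup (Fin n) K) {x y : Fin n → K}
    (hxy : (g : Matrix (Fin n) (Fin n) K).mulVec x = y) :
    ((g * B * g⁻¹ : Matrix.SpecialLinearGroup (Fin n) K) : Matrix (Fin n) (Fin n) K).mulVec y
      = (g : Matrix (Fin n) (Fin n) K).mulVec ((B : Matrix (Fin n) (Fin n) K).mulVec x) := by
  have h1 : ((g⁻¹ : Matrix.SpecialLinearGroup (Fin n) K) : Matrix (Fin n) (Fin n) K)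
      * (g : Matrix (Fin n) (Fin n) K) = 1 := by
    rw [← Matrix.SpecialLinearGroup.coe_mul, inv_mul_cancel, Matrix.SpecialLinearGroup.coe_one]
  have hinv : ((g⁻¹ : Matrix.SpecialLinearGroup (Fin n) K) : Matrix (Fin n) (Fin n) K).mulVec y
      = x := by
    rw [← hxy, Matrix.mulVec_mulVec, h1, Matrix.one_mulVec]
  rw [Matrix.SpecialLinearGroup.coe_mul, Matrix.SpecialLinearGroup.coe_mul,
    ← Matrix.mulVec_mulVec, ← Matrix.mulVec_mulVec, hinv]

lemma key (hn : 4 ≤ n) (A B : Matrix.SpecialLinearGroup (Fin n) K)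
    (hA : ∀ c : K, (A : Matrix (Fin n) (Fin n) K) ≠ c • 1)
    (hB : ∀ c : K, (B : Matrix (Fin n) (Fin n) K) ≠ c • 1) :
    ∃ (g : Matrix.SpecialLinearGroup (Fin n) K) (v : Fin n → K),
      ((g * B * g⁻¹ : Matrix.SpecialLinearGroup (Fin n) K) : Matrix (Fin n) (Fin n) K).mulVec
          ((A : Matrix (Fin n) (Fin n) K).mulVec v)
        - (A : Matrix (Fin n) (Fin n) K).mulVec
          (((g * B * g⁻¹ : Matrix.SpecialLinearGroup (Fin n) K) : Matrix (Fin n) (Fin n) K).mulVec v)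
        ∉ span K ({v, (A : Matrix (Fin n) (Fin n) K).mulVec v} : Set (Fin n → K)) := by
  classical
  set ω : Matrix (Fin n) (Fin n) K := (A : Matrix (Fin n) (Fin n) K) with hω
  set Bm : Matrix (Fin n) (Fin n) K := (B : Matrix (Fin n) (Fin n) K) with hBm
  obtain ⟨v, hv⟩ := exists_nonscalar_vec (by omega) hA
  have hv0 : v ≠ 0 := by
    rintro rfl
    apply hv
    rw [Matrix.mulVec_zero]
    exact Submodule.zero_mem _
  rcases dichotomy hn hB with ⟨p, q, hBp, hind⟩ | ⟨p, q, hind⟩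
  · -- Case C1
    obtain ⟨a, b, hab⟩ := Submodule.mem_span_pair.mp hBp
    set z : Fin n → K := b • ω.mulVec (ω.mulVec v) with hz
    obtain ⟨w, hw⟩ := exists_not_mem_of_finrank_lt
      (W := span K ({v, ω.mulVec v, z} : Set (Fin n → K)))
      (lt_of_le_of_lt (finrank_span_triple_le _ _ _) (by omega))
    have hsub : ({v, ω.mulVec v} : Set (Fin n → K)) ⊆ ({v, ω.mulVec v, z} : Set (Fin n → K)) := by
      intro t ht
      simp only [Set.mem_insert_iff, Set.mem_singleton_iff] at ht ⊢
      tauto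
    have hwS : w ∉ span K ({v, ω.mulVec v} : Set (Fin n → K)) :=
      fun hmem => hw (span_mono hsub hmem)
    have htind : LinearIndependent K ![v, ω.mulVec v, w] := li3 hv0 hv hwS
    obtain ⟨bb, hbb⟩ := exists_basis_ext ![p, q, Bm.mulVec q] hind
    obtain ⟨cc, hcc⟩ := exists_basis_ext ![v, ω.mulVec v, w] htind
    have hne : (0 : ℕ) < n - 3 := by omega
    set j₀ : Fin (n - 3) := ⟨0, hne⟩ with hj₀
    set δ : K := bb.det ⇑cc with hδ
    have hδne : δ ≠ 0 := (bb.isUnit_det cc).ne_zero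
    set t : Fin 3 ⊕ Fin (n - 3) → (Fin n → K) :=
      Function.update ⇑cc (Sum.inr j₀) (δ⁻¹ • cc (Sum.inr j₀)) with ht
    have hdet : LinearMap.det (bb.constr K t) = 1 := by
      rw [det_constr, ht, AlternatingMap.map_update_smul, Function.update_eq_self, ← hδ,
        smul_eq_mul, inv_mul_cancel₀ hδne]
    obtain ⟨g, hg⟩ := toSL hdet
    have hti : ∀ i : Fin 3, t (Sum.inl i) = cc (Sum.inl i) := by
      intro i
      rw [ht]
      exact Function.update_of_ne (by simp) _ _
    have happ : ∀ i : Fin 3,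
        (g : Matrix (Fin n) (Fin n) K).mulVec (![p, q, Bm.mulVec q] i) = ![v, ω.mulVec v, w] i := by
      intro i
      rw [← hbb i, hg, bb.constr_basis, hti i, hcc i]
    have hgp : (g : Matrix (Fin n) (Fin n) K).mulVec p = v := by simpa using happ 0
    have hgq : (g : Matrix (Fin n) (Fin n) K).mulVec q = ω.mulVec v := by simpa using happ 1
    have hgBq : (g : Matrix (Fin n) (Fin n) K).mulVec (Bm.mulVec q) = w := by simpa using happ 2
    refine ⟨g, v, ?_⟩
    have hψv := conj_mulVec g B hgp
    have hψωv := conj_mulVec g B hgq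
    have hgBp : (g : Matrix (Fin n) (Fin n) K).mulVec (Bm.mulVec p) = a • v + b • ω.mulVec v := by
      rw [hBm, ← hab, Matrix.mulVec_add, Matrix.mulVec_smul, Matrix.mulVec_smul, hgp, hgq]
    intro hmem
    apply hw
    rw [hψωv, hψv, hgBp, hgBq] at hmem
    rw [Matrix.mulVec_add, Matrix.mulVec_smul, Matrix.mulVec_smul] at hmem
    have hweq : w = (w - (a • ω.mulVec v + b • ω.mulVec (ω.mulVec v)))
        + a • ω.mulVec v + b • ω.mulVec (ω.mulVec v) := by module
    rw [hweq]
    refine Submodule.add_mem _ (Submodule.add_mem _ ?_ ?_) ?_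
    · exact span_mono hsub hmem
    · exact Submodule.smul_mem _ _ (subset_span (by simp))
    · rw [← hz]
      exact subset_span (by simp)
  · -- Case C2
    obtain ⟨x, hx⟩ := exists_not_mem_of_finrank_lt
      (W := span K ({v, ω.mulVec v} : Set (Fin n → K)))
      (lt_of_le_of_lt (finrank_span_pair_le _ _) (by omega))
    obtain ⟨y₀, hy₀⟩ := exists_not_mem_of_finrank_lt
      (W := span K ({v, ω.mulVec v, x} : Set (Fin n → K)))
      (lt_of_le_of_lt (finrank_span_triple_le _ _ _) (by omega))
    have hxS : x ∉ span K ({v, ω.mulVec v} : Set (Fin n → K)) := hx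
    have hqind : LinearIndependent K ![v, ω.mulVec v, x, y₀] := li4 hv0 hv hxS hy₀
    obtain ⟨bb, hbb⟩ := exists_basis_ext ![p, q, Bm.mulVec p, Bm.mulVec q] hind
    obtain ⟨cc, hcc⟩ := exists_basis_ext ![v, ω.mulVec v, x, y₀] hqind
    set δ : K := bb.det ⇑cc with hδ
    have hδne : δ ≠ 0 := (bb.isUnit_det cc).ne_zero
    have hcc3 : cc (Sum.inl 3) = y₀ := by simpa using hcc 3
    have hcc2 : cc (Sum.inl 2) = x := by simpa using hcc 2
    have hdet1 : bb.det (Function.update ⇑cc (Sum.inl 3) (δ⁻¹ • y₀)) = 1 := by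
      rw [← hcc3, AlternatingMap.map_update_smul, Function.update_eq_self, ← hδ,
        smul_eq_mul, inv_mul_cancel₀ hδne]
    have hdetx : bb.det (Function.update ⇑cc (Sum.inl 3) x) = 0 := by
      apply AlternatingMap.map_eq_zero_of_eq _ _
        (i := (Sum.inl 2 : Fin 4 ⊕ Fin (n - 4))) (j := (Sum.inl 3 : Fin 4 ⊕ Fin (n - 4)))
      · rw [Function.update_of_ne (by simp), Function.update_self, hcc2]
      · simp
    obtain ⟨y, hydet, hycond⟩ : ∃ y : Fin n → K,
        bb.det (Function.update ⇑cc (Sum.inl 3) y) = 1 ∧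
        y - ω.mulVec x ∉ span K ({v, ω.mulVec v} : Set (Fin n → K)) := by
      by_cases hc1 : δ⁻¹ • y₀ - ω.mulVec x ∈ span K ({v, ω.mulVec v} : Set (Fin n → K))
      · refine ⟨δ⁻¹ • y₀ + x, ?_, ?_⟩
        · rw [AlternatingMap.map_update_add, hdet1, hdetx, add_zero]
        · intro hmem
          apply hxS
          have hxeq : x = (δ⁻¹ • y₀ + x - ω.mulVec x) - (δ⁻¹ • y₀ - ω.mulVec x) := by module
          rw [hxeq]
          exact Submodule.sub_mem _ hmem hc1
      · exact ⟨δ⁻¹ • y₀, hdet1, hc1⟩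
    set t : Fin 4 ⊕ Fin (n - 4) → (Fin n → K) := Function.update ⇑cc (Sum.inl 3) y with ht
    have hdet : LinearMap.det (bb.constr K t) = 1 := by rw [det_constr, ht, hydet]
    obtain ⟨g, hg⟩ := toSL hdet
    have happ : ∀ i : Fin 4,
        (g : Matrix (Fin n) (Fin n) K).mulVec (![p, q, Bm.mulVec p, Bm.mulVec q] i)
          = t (Sum.inl i) := by
      intro i
      rw [← hbb i, hg, bb.constr_basis]
    have hgp : (g : Matrix (Fin n) (Fin n) K).mulVec p = v := by
      have := happ 0
      rw [ht] at this
      rw [Function.update_of_ne (by simp)] at this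
      simpa [hcc 0] using this
    have hgq : (g : Matrix (Fin n) (Fin n) K).mulVec q = ω.mulVec v := by
      have := happ 1
      rw [ht] at this
      rw [Function.update_of_ne (by simp)] at this
      simpa [hcc 1] using this
    have hgBp : (g : Matrix (Fin n) (Fin n) K).mulVec (Bm.mulVec p) = x := by
      have := happ 2
      rw [ht] at this
      rw [Function.update_of_ne (by simp)] at this
      simpa [hcc2] using this
    have hgBq : (g : Matrix (Fin n) (Fin n) K).mulVec (Bm.mulVec q) = y := by
      have := happ 3
      rw [ht] at this
      rwa [Function.update_self] at this
    refine ⟨g, v, ?_⟩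
    have hψv := conj_mulVec g B hgp
    have hψωv := conj_mulVec g B hgq
    rw [hψωv, hψv, hgBp, hgBq]
    exact hycond

lemma exists_functional {v w D : Fin n → K}
    (hD : D ∉ span K ({v, w} : Set (Fin n → K))) :
    ∃ fv : Fin n → K, fv ⬝ᵥ v = 0 ∧ fv ⬝ᵥ w = 0 ∧ fv ⬝ᵥ D = 1 := by
  classical
  set S := span K ({v, w} : Set (Fin n → K)) with hS
  set π := S.mkQ with hπ
  have hπD : π D ≠ 0 := by
    intro h0
    exact hD ((Submodule.Quotient.mk_eq_zero S).mp h0)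
  obtain ⟨φ, hφ⟩ : ∃ φ : Module.Dual K ((Fin n → K) ⧸ S), φ (π D) ≠ 0 := by
    by_contra hcon
    push_neg at hcon
    exact hπD ((Module.forall_dual_apply_eq_zero_iff K (π D)).mp hcon)
  set c := φ (π D) with hc
  set f : (Fin n → K) →ₗ[K] K := c⁻¹ • (φ.comp π) with hf
  have hfv : f v = 0 := by
    have : π v = 0 := (Submodule.Quotient.mk_eq_zero S).mpr (subset_span (by simp))
    simp [hf, this]
  have hfw : f w = 0 := by
    have : π w = 0 := (Submodule.Quotient.mk_eq_zero S).mpr (subset_span (by simp))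
    simp [hf, this]
  have hfD : f D = 1 := by
    simp [hf, inv_mul_cancel₀ hφ]
    exact inv_mul_cancel₀ hφ
  have hdot : ∀ y : Fin n → K, (fun j => f (Pi.single j 1)) ⬝ᵥ y = f y := by
    intro y
    have hy : ∑ j, y j • (Pi.single j 1 : Fin n → K) = y := by
      have h1 : ∀ j, y j • (Pi.single j 1 : Fin n → K) = Pi.single j (y j) := by
        intro j
        rw [← Pi.single_smul]
        congr 1
        simp
      simp_rw [h1]
      exact Finset.univ_sum_single y
    calc (fun j => f (Pi.single j 1)) ⬝ᵥ y = ∑ j, f (Pi.single j 1) * y j := rfl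
      _ = ∑ j, f (y j • (Pi.single j 1 : Fin n → K)) := by
          apply Finset.sum_congr rfl
          intro j _
          rw [LinearMap.map_smul, smul_eq_mul, mul_comm]
      _ = f (∑ j, y j • (Pi.single j 1 : Fin n → K)) := (map_sum f _ _).symm
      _ = f y := by rw [hy]
  exact ⟨fun j => f (Pi.single j 1), by rw [hdot]; exact hfv, by rw [hdot]; exact hfw,
    by rw [hdot]; exact hfD⟩

lemma trace_E_mul (M : Matrix (Fin n) (Fin n) K) (v fv : Fin n → K) :
    Matrix.trace (Matrix.vecMulVec v fv * M) = fv ⬝ᵥ M.mulVec v := by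
  simp only [Matrix.trace, Matrix.diag, Matrix.mul_apply, Matrix.vecMulVec_apply,
    Matrix.mulVec, dotProduct, Finset.mul_sum]
  rw [Finset.sum_comm]
  apply Finset.sum_congr rfl
  intro k _
  apply Finset.sum_congr rfl
  intro i _
  ring

lemma E_mul_E (M : Matrix (Fin n) (Fin n) K) (v fv : Fin n → K) :
    Matrix.vecMulVec v fv * M * Matrix.vecMulVec v fv
      = (fv ⬝ᵥ M.mulVec v) • Matrix.vecMulVec v fv := by
  ext i j
  simp only [Matrix.mul_apply, Matrix.vecMulVec_apply, Matrix.smul_apply, Matrix.mulVec,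
    dotProduct, smul_eq_mul, Finset.sum_mul, Finset.mul_sum]
  rw [Finset.sum_comm]
  apply Finset.sum_congr rfl
  intro k _
  apply Finset.sum_congr rfl
  intro l _
  ring

lemma EE_zero (v fv : Fin n → K) (h : fv ⬝ᵥ v = 0) :
    Matrix.vecMulVec v fv * Matrix.vecMulVec v fv = 0 := by
  have h1 := E_mul_E (1 : Matrix (Fin n) (Fin n) K) v fv
  rw [Matrix.mul_one, Matrix.one_mulVec, h, zero_smul] at h1
  exact h1

lemma det_transvection (v fv : Fin n → K) (h : fv ⬝ᵥ v = 0) (x : K) :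
    (1 + x • Matrix.vecMulVec v fv).det = 1 := by
  have hsm : x • Matrix.vecMulVec v fv = Matrix.vecMulVec (x • v) fv := by
    ext i j
    simp [Matrix.vecMulVec_apply]
    ring
  rw [hsm, Matrix.vecMulVec_eq Unit, Matrix.det_one_add_replicateCol_mul_replicateRow]
  rw [dotProduct_smul, h]
  simp

lemma transvection_inv_mul (v fv : Fin n → K) (h : fv ⬝ᵥ v = 0) (x : K) :
    (1 + x • Matrix.vecMulVec v fv) * (1 - x • Matrix.vecMulVec v fv) = 1 := by
  have hEE : (x • Matrix.vecMulVec v fv) * (x • Matrix.vecMulVec v fv) = 0 := by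
    rw [Matrix.smul_mul, Matrix.mul_smul, EE_zero v fv h, smul_zero, smul_zero]
  calc (1 + x • Matrix.vecMulVec v fv) * (1 - x • Matrix.vecMulVec v fv)
      = 1 - (x • Matrix.vecMulVec v fv) * (x • Matrix.vecMulVec v fv) := by
        simp only [mul_sub, add_mul, mul_one, one_mul]
        abel
    _ = 1 := by rw [hEE, sub_zero]

lemma trace_conj_formula (ω ψ : Matrix (Fin n) (Fin n) K) (v fv : Fin n → K)
    (h0 : fv ⬝ᵥ v = 0) (h1 : fv ⬝ᵥ ω.mulVec v = 0) (x : K) :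
    Matrix.trace (ω * ((1 + x • Matrix.vecMulVec v fv) * ψ * (1 - x • Matrix.vecMulVec v fv)))
      = Matrix.trace (ω * ψ)
        + x * (fv ⬝ᵥ ((ψ * ω).mulVec v) - fv ⬝ᵥ ((ω * ψ).mulVec v)) := by
  set E := Matrix.vecMulVec v fv with hE
  have hexp : ω * ((1 + x • E) * ψ * (1 - x • E))
      = ω * ψ + x • (ω * (E * ψ)) - x • (ω * (ψ * E)) - (x * x) • (ω * (E * (ψ * E))) := by
    simp only [mul_add, add_mul, mul_sub, sub_mul, mul_one, one_mul, Matrix.mul_smul,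
      Matrix.smul_mul, smul_smul, Matrix.mul_assoc, smul_sub]
    abel
  rw [hexp]
  rw [Matrix.trace_sub, Matrix.trace_sub, Matrix.trace_add, Matrix.trace_smul,
    Matrix.trace_smul, Matrix.trace_smul]
  have t1 : Matrix.trace (ω * (E * ψ)) = fv ⬝ᵥ ((ψ * ω).mulVec v) := by
    rw [Matrix.trace_mul_comm, Matrix.mul_assoc]
    exact trace_E_mul (ψ * ω) v fv
  have t2 : Matrix.trace (ω * (ψ * E)) = fv ⬝ᵥ ((ω * ψ).mulVec v) := by
    rw [← Matrix.mul_assoc, Matrix.trace_mul_comm]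
    exact trace_E_mul (ω * ψ) v fv
  have t3 : Matrix.trace (ω * (E * (ψ * E))) = 0 := by
    have hEψE : E * (ψ * E) = (fv ⬝ᵥ ψ.mulVec v) • E := by
      rw [← Matrix.mul_assoc]
      exact E_mul_E ψ v fv
    rw [hEψE, Matrix.mul_smul, Matrix.trace_smul, Matrix.trace_mul_comm, trace_E_mul ω v fv, h1,
      smul_zero]
  rw [t1, t2, t3]
  simp only [smul_eq_mul]
  ring

end SLTraceAux

/-- **Lemma.** Let `K` be a field and `n ≥ 4`.
Let `Ω`, `Ψ` be nonscalar conjugacy classes of `SL(n,K)`.  Then the set of traces of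
products `ωψ` (`ω ∈ Ω`, `ψ ∈ Ψ`) is all of `K`. -/
theorem trace_product_conjugacy_classes_SL_of_four_le
    {K : Type*} [Field K] {n : ℕ} (hn : 4 ≤ n)
    (Ω Ψ : Set (Matrix.SpecialLinearGroup (Fin n) K))
    (hΩclass : ∃ A : Matrix.SpecialLinearGroup (Fin n) K,
      Ω = {B | ∃ g : Matrix.SpecialLinearGroup (Fin n) K, g * A * g⁻¹ = B})
    (hΨclass : ∃ A : Matrix.SpecialLinearGroup (Fin n) K,
      Ψ = {B | ∃ g : Matrix.SpecialLinearGroup (Fin n) K, g * A * g⁻¹ = B})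
    (hΩns : ∀ ω ∈ Ω, ∀ c : K, (ω : Matrix (Fin n) (Fin n) K) ≠ c • 1)
    (hΨns : ∀ ψ ∈ Ψ, ∀ c : K, (ψ : Matrix (Fin n) (Fin n) K) ≠ c • 1) :
    {τ : K | ∃ ω ∈ Ω, ∃ ψ ∈ Ψ,
      ((ω : Matrix (Fin n) (Fin n) K) * (ψ : Matrix (Fin n) (Fin n) K)).trace = τ} =
      Set.univ := by
  classical
  obtain ⟨A₀, hΩ⟩ := hΩclass
  obtain ⟨B₀, hΨ⟩ := hΨclass
  have hA₀mem : A₀ ∈ Ω := by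
    rw [hΩ]
    exact ⟨1, by simp⟩
  have hB₀mem : B₀ ∈ Ψ := by
    rw [hΨ]
    exact ⟨1, by simp⟩
  have hA := hΩns A₀ hA₀mem
  have hB := hΨns B₀ hB₀mem
  obtain ⟨g, v, hkey⟩ := SLTraceAux.key hn A₀ B₀ hA hB
  set ω : Matrix (Fin n) (Fin n) K := (A₀ : Matrix (Fin n) (Fin n) K) with hωdef
  set ψsl : Matrix.SpecialLinearGroup (Fin n) K := g * B₀ * g⁻¹ with hψsl
  set ψ : Matrix (Fin n) (Fin n) K := (ψsl : Matrix (Fin n) (Fin n) K) with hψdef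
  obtain ⟨fv, hfv1, hfv2, hfv3⟩ := SLTraceAux.exists_functional hkey
  rw [Set.eq_univ_iff_forall]
  intro τ
  set x : K := τ - Matrix.trace (ω * ψ) with hx
  have hdetp := SLTraceAux.det_transvection v fv hfv1 x
  have hdetm : (1 - x • Matrix.vecMulVec v fv).det = 1 := by
    have h1 : (1 : Matrix (Fin n) (Fin n) K) - x • Matrix.vecMulVec v fv
        = 1 + (-x) • Matrix.vecMulVec v fv := by
      rw [neg_smul, sub_eq_add_neg]
    rw [h1]
    exact SLTraceAux.det_transvection v fv hfv1 (-x)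
  set U : Matrix.SpecialLinearGroup (Fin n) K := ⟨1 + x • Matrix.vecMulVec v fv, hdetp⟩ with hU
  set Uinv : Matrix.SpecialLinearGroup (Fin n) K := ⟨1 - x • Matrix.vecMulVec v fv, hdetm⟩
    with hUinvdef
  have hUinv : U⁻¹ = Uinv := by
    apply inv_eq_of_mul_eq_one_right
    apply Subtype.ext
    rw [Matrix.SpecialLinearGroup.coe_mul]
    exact SLTraceAux.transvection_inv_mul v fv hfv1 x
  refine ⟨A₀, hA₀mem, U * ψsl * U⁻¹, ?_, ?_⟩
  · rw [hΨ]
    refine ⟨U * g, ?_⟩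
    rw [hψsl]
    group
  · have hval : ((U * ψsl * U⁻¹ : Matrix.SpecialLinearGroup (Fin n) K) :
        Matrix (Fin n) (Fin n) K)
        = (1 + x • Matrix.vecMulVec v fv) * ψ * (1 - x • Matrix.vecMulVec v fv) := by
      rw [hUinv, Matrix.SpecialLinearGroup.coe_mul, Matrix.SpecialLinearGroup.coe_mul]
    rw [hval, SLTraceAux.trace_conj_formula ω ψ v fv hfv1 hfv2 x]
    have hcoef : fv ⬝ᵥ ((ψ * ω).mulVec v) - fv ⬝ᵥ ((ω * ψ).mulVec v) = 1 := by
      rw [← dotProduct_sub]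
      rw [← Matrix.mulVec_mulVec, ← Matrix.mulVec_mulVec]
      exact hfv3
    rw [hcoef, mul_one, hx]
    ring
end

section
/- Let K be a field, let Ω be the similarity class of M(2,K) of matrices with minimal polynomial (x − α)² for some α ∈ K, and let Ψ be an irreducible similarity class of M(2,K) (the characteristic polynomial of its elements is irreducible over K). Then tr(ΩΨ) = { tr(ωψ) : ω ∈ Ω, ψ ∈ Ψ } equals K \ { α · tr(Ψ) }, i.e. every element of K except α times the common trace of elements of Ψ is attained, and α·tr(Ψ) is not attained. -/
/-!
Write `ω = α + N`; the condition on the minimal polynomial says exactly that `N ≠ 0` and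
`N² = 0`, and then `tr (ω ψ) = α tr ψ + tr (N ψ)`. For `2 × 2` matrices
`N ψ N = tr (N ψ) N - det N • adj ψ`, so `tr (N ψ) = 0` would force `N ψ N = 0`: `ψ` would map
the line `im N = ker N` into itself, and an eigenvalue contradicts the irreducibility of the
characteristic polynomial. Conversely, an irreducible `ψ` is not upper triangular, and
`N = s E₀₁` gives `tr (N ψ) = s ψ₁₀`, which takes every nonzero value.
-/

open Matrix Polynomial

theorem minpoly.eq_X_sub_C_sq_iff {K A : Type*} [Field K] [Ring A] [Nontrivial A] [Algebra K A]
    {a : A} {α : K} :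
    minpoly K a = (X - C α) ^ 2 ↔
      (a - algebraMap K A α) ^ 2 = 0 ∧ a - algebraMap K A α ≠ 0 := by
  have hroot : Polynomial.aeval a ((X - C α) ^ 2) = (a - algebraMap K A α) ^ 2 := by simp
  constructor
  · intro h
    refine ⟨hroot ▸ h ▸ minpoly.aeval K a, ?_⟩
    rw [sub_ne_zero]
    rintro rfl
    have := congrArg natDegree h
    rw [minpoly.eq_X_sub_C, natDegree_X_sub_C, natDegree_pow, natDegree_X_sub_C] at this
    omega
  · rintro ⟨hsq, hne⟩
    have hmonic : ((X - C α) ^ 2).Monic := (monic_X_sub_C α).pow 2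
    have hint : IsIntegral K a := ⟨_, hmonic, by rwa [← aeval_def, hroot]⟩
    refine (eq_of_monic_of_dvd_of_natDegree_le (minpoly.monic hint) hmonic
      (minpoly.dvd K a (hroot ▸ hsq)) ?_).symm
    rw [natDegree_pow, natDegree_X_sub_C]
    refine (minpoly.two_le_natDegree_iff hint).2 ?_
    rintro ⟨x, rfl⟩
    rw [← map_sub, ← map_pow, map_eq_zero_iff _ (algebraMap K A).injective, sq_eq_zero_iff,
      sub_eq_zero] at hsq
    exact hne (by rw [hsq, sub_self])

namespace Matrix
variable {K : Type*} [Field K]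

theorem isRoot_charpoly_of_mulVec_eq_smul {n : Type*} [Fintype n] [DecidableEq n]
    {M : Matrix n n K} {v : n → K} {x : K} (hv : v ≠ 0) (hMv : M *ᵥ v = x • v) :
    M.charpoly.IsRoot x := by
  rw [IsRoot, eval_charpoly, ← exists_mulVec_eq_zero_iff]
  exact ⟨v, hv, by ext i; simp [sub_mulVec, hMv]⟩

theorem isRoot_charpoly_of_apply_one_zero_eq_zero {M : Matrix (Fin 2) (Fin 2) K}
    (h : M 1 0 = 0) : M.charpoly.IsRoot (M 0 0) :=
  isRoot_charpoly_of_mulVec_eq_smul (v := Pi.single 0 1) (by simp) <| by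
    ext i; fin_cases i <;> simp [h]

theorem apply_one_zero_ne_zero_of_irreducible_charpoly {M : Matrix (Fin 2) (Fin 2) K}
    (hM : Irreducible M.charpoly) : M 1 0 ≠ 0 := fun h =>
  hM.not_isRoot_of_natDegree_ne_one (by simp) (isRoot_charpoly_of_apply_one_zero_eq_zero h)

theorem mul_mul_eq_trace_smul_sub_det_smul_adjugate (N M : Matrix (Fin 2) (Fin 2) K) :
    N * M * N = (N * M).trace • N - N.det • M.adjugate := by
  ext i j
  fin_cases i <;> fin_cases j <;>
    simp [mul_apply, trace_fin_two, det_fin_two, adjugate_fin_two] <;> ring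

theorem exists_smul_eq_of_mulVec_eq_zero {N : Matrix (Fin 2) (Fin 2) K} (hN : N ≠ 0)
    {v w : Fin 2 → K} (hv : v ≠ 0) (hNv : N *ᵥ v = 0) (hNw : N *ᵥ w = 0) :
    ∃ c : K, c • v = w := by
  set f := toLin' N
  have hv' : (⟨v, hNv⟩ : LinearMap.ker f) ≠ 0 := fun h => hv (congrArg Subtype.val h)
  have hrange : 1 ≤ Module.finrank K (LinearMap.range f) :=
    Submodule.one_le_finrank_iff.2 <| mt LinearMap.range_eq_bot.1 <| by simpa [f] using hN
  have hker : 1 ≤ Module.finrank K (LinearMap.ker f) :=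
    Module.finrank_pos_iff_exists_ne_zero.2 ⟨_, hv'⟩
  have hdim := f.finrank_range_add_finrank_ker
  rw [Module.finrank_fin_fun] at hdim
  obtain ⟨c, hc⟩ := (finrank_eq_one_iff_of_nonzero' (K := K) _ hv').1 (by omega) ⟨w, hNw⟩
  exact ⟨c, congrArg Subtype.val hc⟩

theorem trace_mul_ne_zero_of_sq_eq_zero {N M : Matrix (Fin 2) (Fin 2) K} (hN : N ≠ 0)
    (hN2 : N ^ 2 = 0) (hM : Irreducible M.charpoly) : (N * M).trace ≠ 0 := by
  intro htr
  rw [sq] at hN2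
  have hdet : N.det = 0 := by
    simpa only [det_mul, det_zero, mul_self_eq_zero] using congrArg det hN2
  have hNMN : N * M * N = 0 := by
    rw [mul_mul_eq_trace_smul_sub_det_smul_adjugate, htr, hdet, zero_smul, zero_smul, sub_zero]
  obtain ⟨u, hu⟩ : ∃ u, N *ᵥ u ≠ 0 := by
    by_contra! h
    exact hN (ext_iff_mulVec.2 fun u => by simp [h u])
  obtain ⟨c, hc⟩ := exists_smul_eq_of_mulVec_eq_zero hN hu (w := M *ᵥ (N *ᵥ u))
    (by rw [mulVec_mulVec, hN2, zero_mulVec])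
    (by rw [mulVec_mulVec, mulVec_mulVec, hNMN, zero_mulVec])
  exact hM.not_isRoot_of_natDegree_ne_one (by simp)
    (isRoot_charpoly_of_mulVec_eq_smul hu hc.symm)

theorem trace_algebraMap_add_mul {R n : Type*} [CommRing R] [Fintype n] [DecidableEq n]
    (α : R) (N M : Matrix n n R) :
    ((algebraMap R _ α + N) * M).trace = α * M.trace + (N * M).trace := by
  rw [add_mul, trace_add, ← Algebra.smul_def, trace_smul, smul_eq_mul]

end Matrix

/-- Let `K` be a field, `α ∈ K`, let `Ω` be the similarity class of `M(2,K)` consisting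
of the matrices with minimal polynomial `(x - α)²`, and let `Ψ` be an irreducible
similarity class of `M(2,K)` with common trace `tΨ`.  Then the set of traces of
products `ωψ` (`ω ∈ Ω`, `ψ ∈ Ψ`) is exactly `K \ {α · tΨ}`. -/
theorem trace_product_unipotent_type_irreducible
    {K : Type*} [Field K] (α : K)
    (Ω Ψ : Set (Matrix (Fin 2) (Fin 2) K))
    (hΩ : Ω = {M : Matrix (Fin 2) (Fin 2) K | minpoly K M = (X - C α) ^ 2})
    (hΨclass : ∃ A : Matrix (Fin 2) (Fin 2) K,
      Ψ = {B | ∃ g : (Matrix (Fin 2) (Fin 2) K)ˣ,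
        (g : Matrix (Fin 2) (Fin 2) K) * A * (↑g⁻¹ : Matrix (Fin 2) (Fin 2) K) = B})
    (hΨirr : ∀ ψ ∈ Ψ, Irreducible (Matrix.charpoly ψ))
    (tΨ : K) (htΨ : ∀ ψ ∈ Ψ, ψ.trace = tΨ) :
    {τ : K | ∃ ω ∈ Ω, ∃ ψ ∈ Ψ, (ω * ψ).trace = τ} = Set.univ \ {α * tΨ} := by
  obtain ⟨A, hΨ⟩ := hΨclass
  have hA : A ∈ Ψ := hΨ ▸ ⟨1, by simp⟩
  subst hΩ
  ext τ
  simp only [Set.mem_ofPred_eq, Set.mem_sdiff, Set.mem_univ, Set.mem_singleton_iff, true_and]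
  constructor
  · rintro ⟨ω, hω, ψ, hψ, rfl⟩
    obtain ⟨hsq, hne⟩ := minpoly.eq_X_sub_C_sq_iff.1 hω
    rw [← add_sub_cancel (algebraMap K _ α) ω, trace_algebraMap_add_mul, htΨ ψ hψ,
      add_eq_left]
    exact trace_mul_ne_zero_of_sq_eq_zero hne hsq (hΨirr ψ hψ)
  · intro hτ
    have hA10 := apply_one_zero_ne_zero_of_irreducible_charpoly (hΨirr A hA)
    set N : Matrix (Fin 2) (Fin 2) K := !![0, (τ - α * tΨ) / A 1 0; 0, 0]
    refine ⟨algebraMap K _ α + N, minpoly.eq_X_sub_C_sq_iff.2 ⟨?_, ?_⟩, A, hA, ?_⟩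
    · ext i j
      fin_cases i <;> fin_cases j <;> simp [N, sq, mul_apply]
    · intro h
      exact div_ne_zero (sub_ne_zero.2 hτ) hA10 (by simpa [N] using congrFun₂ h 0 1)
    · rw [trace_algebraMap_add_mul, htΨ A hA]
      simp [N, trace_fin_two, vecMul, dotProduct, hA10]
end
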